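/- arXiv:1801.09875 — 3 statements merged into one kernel-verified Lean document; each statement's English description precedes it below -/
import Mathlib

section
/- Suppose ρ > 1/2. Then sup_{n≥1} E[U_n²]/n^{2ρ} < ∞. -/
/-!
Each step moves `Uₙ = Xₙ - Yₙ` by `ξₙ = ±1`, and the urn rule gives the conditional drift
`E[ξₙ | 𝓕ₙ] = ρ Uₙ / Sₙ`. Expanding `(Uₙ + ξₙ)²` yields the exact recursion
`E[Uₙ₊₁²] = (1 + 2ρ/Sₙ) E[Uₙ²] + 1`. Bernoulli's inequality `(1 + c/t) t^c ≤ (t + 1)^c` for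
`c = 2ρ ≥ 1` shows that `E[Uₙ²] / Sₙ^c` grows by at most `Sₙ₊₁^(-c)` per step, and these
increments are summable because `c > 1`.
-/

open MeasureTheory Finset

lemma one_add_div_mul_rpow_le {c t : ℝ} (hc : 1 ≤ c) (ht : 0 < t) :
    (1 + c / t) * t ^ c ≤ (t + 1) ^ c := by
  have hBernoulli : 1 + c * t⁻¹ ≤ (1 + t⁻¹) ^ c :=
    one_add_mul_self_le_rpow_one_add (by linarith [inv_nonneg.2 ht.le]) hc
  calc (1 + c / t) * t ^ c ≤ (1 + t⁻¹) ^ c * t ^ c := by gcongr; simpa [div_eq_mul_inv]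
    _ = (t + 1) ^ c := by
      rw [← Real.mul_rpow (by positivity) ht.le]
      congr 1
      field_simp

lemma div_rpow_le_add_sum {c s : ℝ} (hc : 1 ≤ c) (hs : 0 < s) {m : ℕ → ℝ} (hm : ∀ n, 0 ≤ m n)
    (hrec : ∀ n : ℕ, m (n + 1) ≤ (1 + c / (s + n)) * m n + 1) (n : ℕ) :
    m n / (s + n) ^ c ≤ m 0 / s ^ c + ∑ j ∈ range n, (s + j + 1) ^ (-c) := by
  induction n with
  | zero => simp
  | succ n ih =>
    have hsn : 0 < s + n := by positivity
    have hstep : m (n + 1) / (s + n + 1) ^ c ≤ m n / (s + n) ^ c + (s + n + 1) ^ (-c) :=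
      calc m (n + 1) / (s + n + 1) ^ c ≤ ((1 + c / (s + n)) * m n + 1) / (s + n + 1) ^ c := by
            gcongr; exact hrec n
        _ = (1 + c / (s + n)) * m n / (s + n + 1) ^ c + (s + n + 1) ^ (-c) := by
            rw [add_div, Real.rpow_neg (by positivity), one_div]
        _ ≤ m n / (s + n) ^ c + (s + n + 1) ^ (-c) := by
            refine add_le_add_left ?_ _
            rw [div_le_div_iff₀ (by positivity) (by positivity), mul_right_comm, mul_comm (m n)]
            exact mul_le_mul_of_nonneg_right (one_add_div_mul_rpow_le hc hsn) (hm n)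
    push_cast
    rw [sum_range_succ, ← add_assoc]
    linarith

lemma summable_add_add_one_rpow_neg {c s : ℝ} (hc : 1 < c) (hs : 0 ≤ s) :
    Summable fun j : ℕ => (s + j + 1) ^ (-c) := by
  refine ((Real.summable_one_div_nat_add_rpow (s + 1) c).2 hc).congr fun j => ?_
  rw [abs_of_pos (by positivity), Real.rpow_neg (by positivity), one_div]
  ring_nf

theorem exists_div_rpow_le_of_le_one_add_div_mul_add_one {c s : ℝ} (hc : 1 < c) (hs : 0 < s)
    {m : ℕ → ℝ} (hm : ∀ n, 0 ≤ m n) (hrec : ∀ n : ℕ, m (n + 1) ≤ (1 + c / (s + n)) * m n + 1) :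
    ∃ C, ∀ n : ℕ, 1 ≤ n → m n / (n : ℝ) ^ c ≤ C := by
  set K := m 0 / s ^ c + ∑' j : ℕ, (s + j + 1) ^ (-c)
  refine ⟨K * (s + 1) ^ c, fun n hn => ?_⟩
  have hn : (1 : ℝ) ≤ n := by exact_mod_cast hn
  have hK : m n / (s + n) ^ c ≤ K := by
    refine (div_rpow_le_add_sum hc.le hs hm hrec n).trans ?_
    refine (add_le_add_iff_left _).2 ?_
    exact (summable_add_add_one_rpow_neg hc hs.le).sum_le_tsum _ fun j _ => by positivity
  have hratio : (s + n) ^ c / (n : ℝ) ^ c ≤ (s + 1) ^ c := by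
    rw [← Real.div_rpow (by positivity) (by positivity)]
    gcongr
    rw [div_le_iff₀ (by positivity)]
    nlinarith
  calc m n / (n : ℝ) ^ c = m n / (s + n) ^ c * ((s + n) ^ c / (n : ℝ) ^ c) := by
        field_simp
    _ ≤ K * (s + 1) ^ c :=
        mul_le_mul hK hratio (by positivity) (hK.trans' (div_nonneg (hm n) (by positivity)))

section SecondMoment

variable {Ω : Type*} {m m0 : MeasurableSpace Ω} {P : Measure Ω}

lemma integral_mul_condExp_of_stronglyMeasurable [IsFiniteMeasure P] (hm : m ≤ m0)
    {f g : Ω → ℝ} (hf : StronglyMeasurable[m] f) (hfg : Integrable (f * g) P)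
    (hg : Integrable g P) :
    ∫ ω, f ω * g ω ∂P = ∫ ω, f ω * P[g | m] ω ∂P := by
  rw [← integral_condExp hm]
  exact integral_congr_ae (condExp_mul_of_stronglyMeasurable_left hf hfg hg)

theorem integral_add_sq_of_condExp_eq [IsProbabilityMeasure P] (hm : m ≤ m0) {U ξ : Ω → ℝ}
    {b r : ℝ} (hU : StronglyMeasurable[m] U) (hUb : ∀ᵐ ω ∂P, |U ω| ≤ b)
    (hξ : AEStronglyMeasurable ξ P) (hξ_sq : ∀ᵐ ω ∂P, ξ ω ^ 2 = 1)
    (hdrift : P[ξ | m] =ᵐ[P] fun ω => r * U ω) :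
    ∫ ω, (U ω + ξ ω) ^ 2 ∂P = (1 + 2 * r) * ∫ ω, U ω ^ 2 ∂P + 1 := by
  have hU' : AEStronglyMeasurable U P := (hU.mono hm).aestronglyMeasurable
  have hξb : ∀ᵐ ω ∂P, |ξ ω| ≤ 1 := by
    filter_upwards [hξ_sq] with ω h
    rw [← sq_le_one_iff_abs_le_one, h]
  have iξ : Integrable ξ P := .of_bound hξ 1 hξb
  have iU2 : Integrable (fun ω => U ω ^ 2) P := by
    refine .of_bound (hU'.pow 2) (b ^ 2) ?_
    filter_upwards [hUb] with ω h
    simpa [abs_pow] using pow_le_pow_left₀ (abs_nonneg _) h 2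
  have iUξ : Integrable (U * ξ) P := by
    refine .of_bound (hU'.mul hξ) (b * 1) ?_
    filter_upwards [hUb, hξb] with ω h h'
    simpa [abs_mul] using mul_le_mul h h' (abs_nonneg _) ((abs_nonneg _).trans h)
  have hcross : ∫ ω, U ω * ξ ω ∂P = r * ∫ ω, U ω ^ 2 ∂P := by
    rw [integral_mul_condExp_of_stronglyMeasurable hm hU iUξ iξ, ← integral_const_mul]
    refine integral_congr_ae ?_
    filter_upwards [hdrift] with ω h
    rw [h]
    ring
  calc ∫ ω, (U ω + ξ ω) ^ 2 ∂P = ∫ ω, (U ω ^ 2 + 2 * (U ω * ξ ω) + 1) ∂P := by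
        refine integral_congr_ae ?_
        filter_upwards [hξ_sq] with ω h
        linear_combination h
    _ = (1 + 2 * r) * ∫ ω, U ω ^ 2 ∂P + 1 := by
        have i2Uξ : Integrable (fun ω => 2 * (U ω * ξ ω)) P := iUξ.const_mul 2
        rw [integral_add (f := fun ω => U ω ^ 2 + 2 * (U ω * ξ ω)) (iU2.add i2Uξ)
          (integrable_const 1), integral_add iU2 i2Uξ,
          integral_const_mul, hcross]
        simp only [integral_const, probReal_univ, smul_eq_mul, mul_one]
        ring

end SecondMoment

section Urn

variable {Ω : Type*} {m0 : MeasurableSpace Ω} {P : Measure Ω} {X Y : ℕ → Ω → ℕ}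

lemma ae_add_eq_of_step {x0 y0 : ℕ} (hX0 : ∀ ω, X 0 ω = x0) (hY0 : ∀ ω, Y 0 ω = y0)
    (hstep : ∀ n, ∀ᵐ ω ∂P,
      (X (n + 1) ω = X n ω + 1 ∧ Y (n + 1) ω = Y n ω) ∨
      (X (n + 1) ω = X n ω ∧ Y (n + 1) ω = Y n ω + 1)) (n : ℕ) :
    ∀ᵐ ω ∂P, X n ω + Y n ω = x0 + y0 + n := by
  induction n with
  | zero => exact ae_of_all _ fun ω => by simp [hX0, hY0]
  | succ n ih =>
    filter_upwards [hstep n, ih] with ω hω h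
    omega

lemma urn_drift_eq {α β x y : ℝ} (hαβ : α + β ≠ 0) (hxy : x + y ≠ 0) :
    (α * x + β * y) / ((α + β) * (x + y)) - (α * y + β * x) / ((α + β) * (x + y))
      = (α - β) / (α + β) / (x + y) * (x - y) := by
  field_simp
  ring

variable [IsProbabilityMeasure P] {ℱ : Filtration ℕ m0} {α β ρ t : ℝ} {n : ℕ}

lemma condExp_increment_ae_eq (hαβ : α + β ≠ 0) (hρ : ρ = (α - β) / (α + β))
    (hXmeas : ∀ k, Measurable[ℱ k] (X k)) (hYmeas : ∀ k, Measurable[ℱ k] (Y k))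
    (hstep : ∀ᵐ ω ∂P,
      (X (n + 1) ω = X n ω + 1 ∧ Y (n + 1) ω = Y n ω) ∨
      (X (n + 1) ω = X n ω ∧ Y (n + 1) ω = Y n ω + 1))
    (hS : ∀ᵐ ω ∂P, (X n ω : ℝ) + Y n ω = t) (ht : t ≠ 0)
    (hup : P[({ω' | X (n + 1) ω' = X n ω' + 1 ∧ Y (n + 1) ω' = Y n ω'} : Set Ω).indicator
          (fun _ => (1 : ℝ)) | ℱ n]
        =ᵐ[P] fun ω => (α * (X n ω : ℝ) + β * (Y n ω : ℝ)) /
          ((α + β) * ((X n ω : ℝ) + (Y n ω : ℝ))))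
    (hdown : P[({ω' | X (n + 1) ω' = X n ω' ∧ Y (n + 1) ω' = Y n ω' + 1} : Set Ω).indicator
          (fun _ => (1 : ℝ)) | ℱ n]
        =ᵐ[P] fun ω => (α * (Y n ω : ℝ) + β * (X n ω : ℝ)) /
          ((α + β) * ((X n ω : ℝ) + (Y n ω : ℝ)))) :
    P[fun ω => ((X (n + 1) ω : ℝ) - Y (n + 1) ω) - ((X n ω : ℝ) - Y n ω) | ℱ n]
      =ᵐ[P] fun ω => ρ / t * ((X n ω : ℝ) - Y n ω) := by
  set A : Set Ω := {ω' | X (n + 1) ω' = X n ω' + 1 ∧ Y (n + 1) ω' = Y n ω'}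
  set B : Set Ω := {ω' | X (n + 1) ω' = X n ω' ∧ Y (n + 1) ω' = Y n ω' + 1}
  have hX k : Measurable (X k) := (hXmeas k).mono (ℱ.le k) le_rfl
  have hY k : Measurable (Y k) := (hYmeas k).mono (ℱ.le k) le_rfl
  have hA : MeasurableSet A :=
    (measurableSet_eq_fun (hX _) ((hX n).add_const 1)).inter (measurableSet_eq_fun (hY _) (hY n))
  have hB : MeasurableSet B :=
    (measurableSet_eq_fun (hX _) (hX n)).inter (measurableSet_eq_fun (hY _) ((hY n).add_const 1))
  have hξ : (fun ω => ((X (n + 1) ω : ℝ) - Y (n + 1) ω) - ((X n ω : ℝ) - Y n ω))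
      =ᵐ[P] A.indicator (fun _ => 1) - B.indicator (fun _ => 1) := by
    filter_upwards [hstep] with ω h
    rcases h with ⟨hx, hy⟩ | ⟨hx, hy⟩ <;> simp [A, B, hx, hy]
  calc P[fun ω => ((X (n + 1) ω : ℝ) - Y (n + 1) ω) - ((X n ω : ℝ) - Y n ω) | ℱ n]
      =ᵐ[P] P[A.indicator (fun _ => 1) - B.indicator (fun _ => 1) | ℱ n] := condExp_congr_ae hξ
    _ =ᵐ[P] P[A.indicator (fun _ => 1) | ℱ n] - P[B.indicator (fun _ => 1) | ℱ n] :=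
      condExp_sub ((integrable_const 1).indicator hA) ((integrable_const 1).indicator hB) _
    _ =ᵐ[P] fun ω => ρ / t * ((X n ω : ℝ) - Y n ω) := by
      filter_upwards [hup, hdown, hS] with ω hω_up hω_down hω
      rw [Pi.sub_apply, hω_up, hω_down, urn_drift_eq hαβ (hω ▸ ht), hω, hρ]

theorem integral_sub_sq_succ (hαβ : α + β ≠ 0) (hρ : ρ = (α - β) / (α + β))
    (hXmeas : ∀ k, Measurable[ℱ k] (X k)) (hYmeas : ∀ k, Measurable[ℱ k] (Y k))
    (hstep : ∀ᵐ ω ∂P,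
      (X (n + 1) ω = X n ω + 1 ∧ Y (n + 1) ω = Y n ω) ∨
      (X (n + 1) ω = X n ω ∧ Y (n + 1) ω = Y n ω + 1))
    (hS : ∀ᵐ ω ∂P, (X n ω : ℝ) + Y n ω = t) (ht : t ≠ 0)
    (hup : P[({ω' | X (n + 1) ω' = X n ω' + 1 ∧ Y (n + 1) ω' = Y n ω'} : Set Ω).indicator
          (fun _ => (1 : ℝ)) | ℱ n]
        =ᵐ[P] fun ω => (α * (X n ω : ℝ) + β * (Y n ω : ℝ)) /
          ((α + β) * ((X n ω : ℝ) + (Y n ω : ℝ))))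
    (hdown : P[({ω' | X (n + 1) ω' = X n ω' ∧ Y (n + 1) ω' = Y n ω' + 1} : Set Ω).indicator
          (fun _ => (1 : ℝ)) | ℱ n]
        =ᵐ[P] fun ω => (α * (Y n ω : ℝ) + β * (X n ω : ℝ)) /
          ((α + β) * ((X n ω : ℝ) + (Y n ω : ℝ)))) :
    ∫ ω, ((X (n + 1) ω : ℝ) - Y (n + 1) ω) ^ 2 ∂P
      = (1 + 2 * ρ / t) * ∫ ω, ((X n ω : ℝ) - Y n ω) ^ 2 ∂P + 1 := by
  have hUmeas k : Measurable[ℱ k] fun ω => (X k ω : ℝ) - Y k ω :=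
    (measurable_from_top.comp (hXmeas k)).sub (measurable_from_top.comp (hYmeas k))
  have hUb : ∀ᵐ ω ∂P, |(X n ω : ℝ) - Y n ω| ≤ t := by
    filter_upwards [hS] with ω h
    rw [abs_sub_le_iff]
    constructor <;> linarith [(X n ω).cast_nonneg (α := ℝ), (Y n ω).cast_nonneg (α := ℝ)]
  have hξ : AEStronglyMeasurable
      (fun ω => ((X (n + 1) ω : ℝ) - Y (n + 1) ω) - ((X n ω : ℝ) - Y n ω)) P :=
    (((hUmeas _).mono (ℱ.le _) le_rfl).sub ((hUmeas n).mono (ℱ.le n) le_rfl)).aestronglyMeasurable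
  have hξ_sq : ∀ᵐ ω ∂P, (((X (n + 1) ω : ℝ) - Y (n + 1) ω) - ((X n ω : ℝ) - Y n ω)) ^ 2 = 1 := by
    filter_upwards [hstep] with ω h
    rcases h with ⟨hx, hy⟩ | ⟨hx, hy⟩ <;> simp [hx, hy]
  have := integral_add_sq_of_condExp_eq (ℱ.le n) (hUmeas n).stronglyMeasurable hUb hξ hξ_sq
    (condExp_increment_ae_eq hαβ hρ hXmeas hYmeas hstep hS ht hup hdown)
  simpa only [add_sub_cancel, mul_div_assoc] using this

end Urn

theorem stmt_2_general
    {Ω : Type*} {m0 : MeasurableSpace Ω} (P : Measure Ω) [IsProbabilityMeasure P]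
    (ℱ : Filtration ℕ m0)
    (α β : ℝ) (hαβ : 0 < α + β)
    (ρ : ℝ) (hρ : ρ = (α - β) / (α + β))
    (x0 y0 : ℕ) (hx0y0 : 1 ≤ x0 + y0)
    (X Y : ℕ → Ω → ℕ)
    (hXmeas : ∀ n, Measurable[ℱ n] (X n)) (hYmeas : ∀ n, Measurable[ℱ n] (Y n))
    (hX0 : ∀ ω, X 0 ω = x0) (hY0 : ∀ ω, Y 0 ω = y0)
    (hstep : ∀ n, ∀ᵐ ω ∂P,
      (X (n + 1) ω = X n ω + 1 ∧ Y (n + 1) ω = Y n ω) ∨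
      (X (n + 1) ω = X n ω ∧ Y (n + 1) ω = Y n ω + 1))
    (hup : ∀ n,
      P[({ω' | X (n + 1) ω' = X n ω' + 1 ∧ Y (n + 1) ω' = Y n ω'} : Set Ω).indicator
          (fun _ => (1 : ℝ)) | ℱ n]
        =ᵐ[P] fun ω => (α * (X n ω : ℝ) + β * (Y n ω : ℝ)) /
          ((α + β) * ((X n ω : ℝ) + (Y n ω : ℝ))))
    (hdown : ∀ n,
      P[({ω' | X (n + 1) ω' = X n ω' ∧ Y (n + 1) ω' = Y n ω' + 1} : Set Ω).indicator
          (fun _ => (1 : ℝ)) | ℱ n]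
        =ᵐ[P] fun ω => (α * (Y n ω : ℝ) + β * (X n ω : ℝ)) /
          ((α + β) * ((X n ω : ℝ) + (Y n ω : ℝ))))
    (hρhalf : 1 / 2 < ρ) :
    ∃ C : ℝ, ∀ n : ℕ, 1 ≤ n →
      (∫ ω, ((X n ω : ℝ) - (Y n ω : ℝ)) ^ 2 ∂P) / (n : ℝ) ^ (2 * ρ) ≤ C := by
  have hs : (0 : ℝ) < x0 + y0 := by exact_mod_cast hx0y0
  have hS (n : ℕ) : ∀ᵐ ω ∂P, (X n ω : ℝ) + Y n ω = x0 + y0 + n := by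
    filter_upwards [ae_add_eq_of_step hX0 hY0 hstep n] with ω h
    exact_mod_cast h
  refine exists_div_rpow_le_of_le_one_add_div_mul_add_one (by linarith) hs
    (fun n => integral_nonneg fun ω => sq_nonneg _) fun n => ?_
  exact (integral_sub_sq_succ hαβ.ne' hρ hXmeas hYmeas (hstep n) (hS n) (by positivity)
    (hup n) (hdown n)).le

/-- For the auxiliary process `(Xₙ, Yₙ)`, with `Uₙ = Xₙ − Yₙ` and
`ρ = (α − β)/(α + β) > 1/2`, one has `sup_{n ≥ 1} E[Uₙ²]/n^{2ρ} < ∞`. -/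
theorem stmt_2
    {Ω : Type*} {m0 : MeasurableSpace Ω} (P : Measure Ω) [IsProbabilityMeasure P]
    (ℱ : Filtration ℕ m0)
    (α β : ℝ) (hα : 0 ≤ α) (hβ : 0 ≤ β) (hαβ : 0 < α + β)
    (ρ : ℝ) (hρ : ρ = (α - β) / (α + β))
    (x0 y0 : ℕ) (hx0y0 : 1 ≤ x0 + y0)
    (X Y : ℕ → Ω → ℕ)
    (hXmeas : ∀ n, Measurable[ℱ n] (X n)) (hYmeas : ∀ n, Measurable[ℱ n] (Y n))
    (hX0 : ∀ ω, X 0 ω = x0) (hY0 : ∀ ω, Y 0 ω = y0)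
    (hstep : ∀ n, ∀ᵐ ω ∂P,
      (X (n + 1) ω = X n ω + 1 ∧ Y (n + 1) ω = Y n ω) ∨
      (X (n + 1) ω = X n ω ∧ Y (n + 1) ω = Y n ω + 1))
    (hup : ∀ n,
      P[({ω' | X (n + 1) ω' = X n ω' + 1 ∧ Y (n + 1) ω' = Y n ω'} : Set Ω).indicator
          (fun _ => (1 : ℝ)) | ℱ n]
        =ᵐ[P] fun ω => (α * (X n ω : ℝ) + β * (Y n ω : ℝ)) /
          ((α + β) * ((X n ω : ℝ) + (Y n ω : ℝ))))
    (hdown : ∀ n,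
      P[({ω' | X (n + 1) ω' = X n ω' ∧ Y (n + 1) ω' = Y n ω' + 1} : Set Ω).indicator
          (fun _ => (1 : ℝ)) | ℱ n]
        =ᵐ[P] fun ω => (α * (Y n ω : ℝ) + β * (X n ω : ℝ)) /
          ((α + β) * ((X n ω : ℝ) + (Y n ω : ℝ))))
    (hρhalf : 1 / 2 < ρ) :
    ∃ C : ℝ, ∀ n : ℕ, 1 ≤ n →
      (∫ ω, ((X n ω : ℝ) - (Y n ω : ℝ)) ^ 2 ∂P) / (n : ℝ) ^ (2 * ρ) ≤ C :=
  stmt_2_general P ℱ α β hαβ ρ hρ x0 y0 hx0y0 X Y hXmeas hYmeas hX0 hY0 hstep hup hdown hρhalf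
end

section
/- Suppose α₁α₂ > β₁β₂. Then almost surely on the event {τ = ∞}, S_n/n → ρ̃ as n → ∞ (i.e. the event {τ = ∞} ∖ {lim_{n→∞} S_n/n = ρ̃} has probability zero). -/
/-!
Write `ρ = α₁α₂ - β₁β₂`, let `A, B` be the coefficients of `S`, and
`c = 2 l₁ β₂ (β₁ + α₂) + 2 l₂ β₁ (β₂ + α₁) ≥ 0`. Off the axes, the conditional mean of
`S (n + 1) - S n` given `ℱ n` is `(A (l₁ + α₁ x) + B (l₂ + α₂ y) - A β₁ y - B β₂ x) / W`, and
`A, B` are chosen so that this numerator is `ρ W + c`. Subtracting the predictable drift from `S`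
leaves a martingale with bounded increments, which is `o(n)` almost surely: its transform by the
weights `1 / (k + 1)` has orthogonal increments, so it is bounded in `L²` and converges, and
Kronecker's lemma applies. On `{τ = ∞}` this gives `(S n - ∑_{k<n} (ρ + c / W k)) / n → 0`.
As `c / W k ≥ 0` and `ρ > 0`, `S n → ∞`; since `S` is dominated by a multiple of `W`, also
`W n → ∞`, so the Cesàro means of `c / W k` vanish and `S n / n → ρ`.
-/

open MeasureTheory Filter Finset Topology

/-- Kronecker's lemma. -/
theorem tendsto_sum_div_natCast_zero_of_tendsto_sum_inv_succ_mul {a : ℕ → ℝ} {c : ℝ}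
    (h : Tendsto (fun n => ∑ k ∈ range n, ((k : ℝ) + 1)⁻¹ * a k) atTop (𝓝 c)) :
    Tendsto (fun n => (∑ k ∈ range n, a k) / n) atTop (𝓝 0) := by
  set s : ℕ → ℝ := fun n => ∑ k ∈ range n, ((k : ℝ) + 1)⁻¹ * a k
  have summation_by_parts : ∀ n, ∑ k ∈ range n, a k = n * s n - ∑ k ∈ range n, s k := by
    intro n
    induction n with
    | zero => simp [s]
    | succ n ih =>
      simp only [sum_range_succ, ih, s]
      push_cast
      field_simp
      ring
  have hlim := h.sub h.cesaro
  rw [sub_self] at hlim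
  refine hlim.congr' ?_
  filter_upwards [eventually_ne_atTop 0] with n hn
  rw [summation_by_parts]
  field_simp

theorem tendsto_atTop_of_tendsto_sub_sum_div {s u : ℕ → ℝ} {ρ : ℝ} (hρ : 0 < ρ)
    (hu : ∀ k, 0 ≤ u k) (h : Tendsto (fun n => (s n - ∑ k ∈ range n, (ρ + u k)) / n) atTop (𝓝 0)) :
    Tendsto s atTop atTop := by
  refine tendsto_atTop_mono' atTop ?_
    ((tendsto_natCast_atTop_atTop (R := ℝ)).const_mul_atTop (half_pos hρ))
  filter_upwards [h.eventually (eventually_gt_nhds (neg_lt_zero.2 (half_pos hρ))),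
    eventually_gt_atTop 0] with n hgt hn
  rw [lt_div_iff₀ (Nat.cast_pos.2 hn), sum_add_distrib, sum_const, card_range, nsmul_eq_mul] at hgt
  linarith [sum_nonneg fun k (_ : k ∈ range n) => hu k]

theorem tendsto_div_natCast_of_tendsto_sub_sum_div {s u : ℕ → ℝ} {ρ : ℝ}
    (hu : Tendsto u atTop (𝓝 0))
    (h : Tendsto (fun n => (s n - ∑ k ∈ range n, (ρ + u k)) / n) atTop (𝓝 0)) :
    Tendsto (fun n => s n / n) atTop (𝓝 ρ) := by
  have hlim := (h.add_const ρ).add hu.cesaro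
  rw [zero_add, add_zero] at hlim
  refine hlim.congr' ?_
  filter_upwards [eventually_ne_atTop 0] with n hn
  rw [sum_add_distrib, sum_const, card_range, nsmul_eq_mul]
  field_simp
  ring

theorem tendsto_div_natCast_of_tendsto_sub_sum_div_of_le_mul {s w : ℕ → ℝ} {ρ c κ : ℝ}
    (hρ : 0 < ρ) (hc : 0 ≤ c) (hκ : 0 < κ) (hw : ∀ k, 0 ≤ w k) (hsw : ∀ k, s k ≤ κ * w k)
    (h : Tendsto (fun n => (s n - ∑ k ∈ range n, (ρ + c / w k)) / n) atTop (𝓝 0)) :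
    Tendsto (fun n => s n / n) atTop (𝓝 ρ) := by
  have hs := tendsto_atTop_of_tendsto_sub_sum_div hρ (fun k => div_nonneg hc (hw k)) h
  have hw_top : Tendsto w atTop atTop :=
    (tendsto_const_mul_atTop_of_pos hκ).1 (tendsto_atTop_mono hsw hs)
  exact tendsto_div_natCast_of_tendsto_sub_sum_div (tendsto_const_nhds.div_atTop hw_top) h

def IsUnitStep (x y x' y' : ℕ) : Prop :=
  (x' = x + 1 ∧ y' = y) ∨ (x' = x ∧ y' = y + 1) ∨ (x' + 1 = x ∧ y' = y) ∨ (x' = x ∧ y' + 1 = y)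

namespace IsUnitStep

variable {x y x' y' : ℕ}

theorem linear_sub_eq (h : IsUnitStep x y x' y') (a b : ℝ) :
    a * x' + b * y' - (a * x + b * y) =
      a * (if x' = x + 1 ∧ y' = y then 1 else 0) + b * (if x' = x ∧ y' = y + 1 then 1 else 0) -
        a * (if x' + 1 = x ∧ y' = y then 1 else 0) -
        b * (if x' = x ∧ y' + 1 = y then 1 else 0) := by
  rcases h with ⟨rfl, rfl⟩ | ⟨rfl, rfl⟩ | ⟨rfl, rfl⟩ | ⟨rfl, rfl⟩ <;> split_ifs <;>
    first | omega | (push_cast; ring)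

theorem abs_linear_sub_le (h : IsUnitStep x y x' y') (a b : ℝ) :
    |a * x' + b * y' - (a * x + b * y)| ≤ |a| + |b| := by
  rcases h with ⟨rfl, rfl⟩ | ⟨rfl, rfl⟩ | ⟨rfl, rfl⟩ | ⟨rfl, rfl⟩ <;> push_cast <;> ring_nf <;>
    simp

end IsUnitStep

namespace MeasureTheory

variable {Ω : Type*} {m0 : MeasurableSpace Ω} {μ : Measure Ω} [IsFiniteMeasure μ]
  {ℱ : Filtration ℕ m0} {M : ℕ → Ω → ℝ}

theorem Martingale.sum_mul_sub (hM : Martingale M ℱ μ) (ξ : ℕ → ℝ) :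
    Martingale (fun n ω => ∑ k ∈ range n, ξ k * (M (k + 1) ω - M k ω)) ℱ μ := by
  refine martingale_of_condExp_sub_eq_zero_nat (fun n => ?_) (fun n => ?_) fun n => ?_
  · refine Finset.stronglyMeasurable_fun_sum _ fun k hk => StronglyMeasurable.const_mul ?_ _
    exact ((hM.stronglyAdapted (k + 1)).mono (ℱ.mono (mem_range.1 hk))).sub
      ((hM.stronglyAdapted k).mono (ℱ.mono (mem_range_le hk)))
  · exact integrable_finsetSum _ fun k _ =>
      ((hM.integrable _).sub (hM.integrable _)).const_mul (ξ k)
  · have hinc : (fun ω => ∑ k ∈ range (n + 1), ξ k * (M (k + 1) ω - M k ω)) -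
        (fun ω => ∑ k ∈ range n, ξ k * (M (k + 1) ω - M k ω)) = ξ n • (M (n + 1) - M n) := by
      ext ω; simp [sum_range_succ]
    rw [hinc]
    refine (condExp_smul _ _ _).trans ?_
    filter_upwards [(condExp_sub (hM.integrable (n + 1)) (hM.integrable n) _).trans
      ((hM.condExp_ae_eq n.le_succ).sub (hM.condExp_ae_eq le_rfl))] with ω hω
    simp [hω]

theorem Martingale.integral_sq_add_one (hM : Martingale M ℱ μ) (hM2 : ∀ n, MemLp (M n) 2 μ)
    (n : ℕ) : ∫ ω, M (n + 1) ω ^ 2 ∂μ =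
      ∫ ω, M n ω ^ 2 ∂μ + ∫ ω, (M (n + 1) ω - M n ω) ^ 2 ∂μ := by
  have hD2 : MemLp (fun ω => M (n + 1) ω - M n ω) 2 μ := (hM2 _).sub (hM2 n)
  have hD : μ[fun ω => M (n + 1) ω - M n ω | ℱ n] =ᵐ[μ] 0 := by
    filter_upwards [(condExp_sub (hM.integrable (n + 1)) (hM.integrable n) _).trans
      ((hM.condExp_ae_eq n.le_succ).sub (hM.condExp_ae_eq le_rfl))] with ω hω
    exact hω.trans (sub_self _)
  have hprod : Integrable (fun ω => M n ω * (M (n + 1) ω - M n ω)) μ :=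
    (hM2 n).integrable_mul hD2
  have hcross : ∫ ω, M n ω * (M (n + 1) ω - M n ω) ∂μ = 0 := by
    rw [← integral_condExp (ℱ.le n)]
    refine integral_eq_zero_of_ae ?_
    filter_upwards [condExp_mul_of_stronglyMeasurable_left (hM.stronglyAdapted n) hprod
      (hD2.integrable one_le_two), hD] with ω h₁ h₂
    exact h₁.trans (by simp [h₂])
  calc ∫ ω, M (n + 1) ω ^ 2 ∂μ
      = ∫ ω, (M n ω ^ 2 + 2 * (M n ω * (M (n + 1) ω - M n ω))) + (M (n + 1) ω - M n ω) ^ 2 ∂μ := by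
        congr 1; ext ω; ring
    _ = ∫ ω, M n ω ^ 2 ∂μ + 2 * ∫ ω, M n ω * (M (n + 1) ω - M n ω) ∂μ
          + ∫ ω, (M (n + 1) ω - M n ω) ^ 2 ∂μ := by
        rw [integral_add (f := fun ω => M n ω ^ 2 + 2 * (M n ω * (M (n + 1) ω - M n ω)))
            ((hM2 n).integrable_sq.add (hprod.const_mul 2)) hD2.integrable_sq,
          integral_add (hM2 n).integrable_sq (hprod.const_mul 2), integral_const_mul]
    _ = _ := by rw [hcross, mul_zero, add_zero]

theorem Martingale.integral_sq_eq_sum (hM : Martingale M ℱ μ) (hM2 : ∀ n, MemLp (M n) 2 μ)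
    (n : ℕ) : ∫ ω, M n ω ^ 2 ∂μ =
      ∫ ω, M 0 ω ^ 2 ∂μ + ∑ k ∈ range n, ∫ ω, (M (k + 1) ω - M k ω) ^ 2 ∂μ := by
  induction n with
  | zero => simp
  | succ n ih => rw [hM.integral_sq_add_one hM2, ih, sum_range_succ, add_assoc]

theorem Martingale.exists_ae_tendsto_of_integral_sq_le (hM : Martingale M ℱ μ)
    (hM2 : ∀ n, MemLp (M n) 2 μ) {K : ℝ} (hK : ∀ n, ∫ ω, M n ω ^ 2 ∂μ ≤ K) :
    ∀ᵐ ω ∂μ, ∃ c, Tendsto (fun n => M n ω) atTop (𝓝 c) := by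
  refine hM.submartingale.exists_ae_tendsto_of_bdd
    (R := ((K + μ.real Set.univ) / 2).toNNReal) fun n => ?_
  have hL1 : ∫ ω, ‖M n ω‖ ∂μ ≤ (K + μ.real Set.univ) / 2 := by
    calc ∫ ω, ‖M n ω‖ ∂μ ≤ ∫ ω, (M n ω ^ 2 + 1) / 2 ∂μ := by
          refine integral_mono (hM.integrable n).norm
            (((hM2 n).integrable_sq.add (integrable_const 1)).div_const 2) fun ω => ?_
          nlinarith [sq_nonneg (|M n ω| - 1), sq_abs (M n ω), Real.norm_eq_abs (M n ω)]
      _ = (∫ ω, M n ω ^ 2 ∂μ + μ.real Set.univ) / 2 := by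
          rw [integral_div, integral_add (hM2 n).integrable_sq (integrable_const 1)]
          simp
      _ ≤ (K + μ.real Set.univ) / 2 := by gcongr; exact hK n
  rw [eLpNorm_one_eq_lintegral_enorm, ← ofReal_integral_norm_eq_lintegral_enorm (hM.integrable n)]
  exact ENNReal.ofReal_le_ofReal hL1

theorem Martingale.ae_tendsto_div_natCast_zero (hM : Martingale M ℱ μ) {C : ℝ}
    (hC : ∀ n, ∀ᵐ ω ∂μ, |M (n + 1) ω - M n ω| ≤ C) :
    ∀ᵐ ω ∂μ, Tendsto (fun n => M n ω / n) atTop (𝓝 0) := by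
  set X : ℕ → Ω → ℝ := fun n ω => ∑ k ∈ range n, ((k : ℝ) + 1)⁻¹ * (M (k + 1) ω - M k ω)
  have hX : Martingale X ℱ μ := hM.sum_mul_sub _
  have hXinc : ∀ n, ∀ᵐ ω ∂μ, |X (n + 1) ω - X n ω| ≤ ((n : ℝ) + 1)⁻¹ * C := by
    intro n
    filter_upwards [hC n] with ω hω
    simp only [X, sum_range_succ, add_sub_cancel_left, abs_mul, abs_inv]
    rw [abs_of_pos (by positivity)]
    gcongr
  have hX2 : ∀ n, MemLp (X n) 2 μ := by
    intro n
    induction n with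
    | zero => simp [X]
    | succ n ih =>
      have hmeas : StronglyMeasurable (fun ω => X (n + 1) ω - X n ω) :=
        ((hX.stronglyAdapted (n + 1)).mono (ℱ.le _)).sub ((hX.stronglyAdapted n).mono (ℱ.le _))
      have hinc : MemLp (fun ω => X (n + 1) ω - X n ω) 2 μ :=
        .of_bound hmeas.aestronglyMeasurable _ (hXinc n)
      convert ih.add hinc using 1
      ext ω; simp
  have hsummable : Summable fun k : ℕ => ((k : ℝ) + 1)⁻¹ ^ 2 := by
    simpa [inv_pow] using (summable_nat_add_iff 1).mpr (Real.summable_nat_pow_inv.mpr one_lt_two)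
  have hK : ∀ n, ∫ ω, X n ω ^ 2 ∂μ ≤ ∑' k : ℕ, (((k : ℝ) + 1)⁻¹ * C) ^ 2 * μ.real Set.univ := by
    intro n
    rw [hX.integral_sq_eq_sum hX2]
    calc ∫ ω, X 0 ω ^ 2 ∂μ + ∑ k ∈ range n, ∫ ω, (X (k + 1) ω - X k ω) ^ 2 ∂μ
        = ∑ k ∈ range n, ∫ ω, (X (k + 1) ω - X k ω) ^ 2 ∂μ := by simp [X]
      _ ≤ ∑ k ∈ range n, (((k : ℝ) + 1)⁻¹ * C) ^ 2 * μ.real Set.univ := by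
          refine sum_le_sum fun k _ => (le_abs_self _).trans ?_
          rw [← Real.norm_eq_abs]
          refine norm_integral_le_of_norm_le_const ?_
          filter_upwards [hXinc k] with ω hω
          rw [Real.norm_eq_abs, abs_pow]
          exact pow_le_pow_left₀ (abs_nonneg _) hω 2
      _ ≤ _ := Summable.sum_le_tsum _ (fun _ _ => by positivity)
          (by simpa [mul_pow] using (hsummable.mul_right (C ^ 2)).mul_right (μ.real Set.univ))
  filter_upwards [hX.exists_ae_tendsto_of_integral_sq_le hX2 hK] with ω ⟨c, hc⟩
  have h := tendsto_sum_div_natCast_zero_of_tendsto_sum_inv_succ_mul hc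
  rw [funext fun n : ℕ => congrArg (· / (n : ℝ)) (sum_range_sub (fun k => M k ω) n)] at h
  simpa [sub_div] using h.add (tendsto_const_div_atTop_nhds_zero_nat (M 0 ω))

theorem ae_tendsto_martingalePart_div_natCast_zero {f : ℕ → Ω → ℝ} (hf : StronglyAdapted ℱ f)
    {C : ℝ} (hC : ∀ n, ∀ᵐ ω ∂μ, |f (n + 1) ω - f n ω| ≤ C) :
    ∀ᵐ ω ∂μ, Tendsto (fun n => martingalePart f ℱ μ n ω / n) atTop (𝓝 0) := by
  -- `f 0` need not be integrable, so we work with `f - f 0`, which has the same increments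
  set g : ℕ → Ω → ℝ := fun n => f n - f 0
  have hg_inc : ∀ n, g (n + 1) - g n = f (n + 1) - f n := fun n => sub_sub_sub_cancel_right _ _ _
  have hf_inc : ∀ n, Integrable (f (n + 1) - f n) μ := fun n => by
    have hmeas : StronglyMeasurable (f (n + 1) - f n) :=
      ((hf (n + 1)).mono (ℱ.le _)).sub ((hf n).mono (ℱ.le _))
    exact .of_bound hmeas.aestronglyMeasurable C (hC n)
  have hg_int : ∀ n, Integrable (g n) μ := by
    intro n
    induction n with
    | zero => simp [g]
    | succ n ih =>
      have h := ih.add (hf_inc n)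
      rwa [← hg_inc, add_sub_cancel] at h
  have hM : Martingale (martingalePart g ℱ μ) ℱ μ :=
    martingale_martingalePart (fun n => (hf n).sub ((hf 0).mono (ℱ.mono (Nat.zero_le n)))) hg_int
  have hpart : ∀ n, martingalePart g ℱ μ n = martingalePart f ℱ μ n - f 0 := by
    intro n
    simp only [martingalePart, predictablePart, hg_inc, g]
    abel
  have hM_inc : ∀ n, ∀ᵐ ω ∂μ,
      |martingalePart g ℱ μ (n + 1) ω - martingalePart g ℱ μ n ω| ≤ 2 * C := by
    intro n
    have hcond : ∀ᵐ ω ∂μ, |μ[f (n + 1) - f n | ℱ n] ω| ≤ C :=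
      ae_bdd_abs_condExp_of_ae_bdd_abs (hC n)
    filter_upwards [hC n, hcond] with ω h₁ h₂
    have hincr : martingalePart g ℱ μ (n + 1) ω - martingalePart g ℱ μ n ω =
        (f (n + 1) ω - f n ω) - μ[f (n + 1) - f n | ℱ n] ω := by
      simp only [martingalePart, predictablePart_add_one, hg_inc, Pi.sub_apply, Pi.add_apply, g]
      ring
    rw [hincr]
    exact (abs_sub _ _).trans (by linarith)
  filter_upwards [hM.ae_tendsto_div_natCast_zero hM_inc] with ω hω
  simpa [hpart, sub_div] using hω.add (tendsto_const_div_atTop_nhds_zero_nat (f 0 ω))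

theorem condExp_linear_sub_ae_eq_of_isUnitStep {m : MeasurableSpace Ω} {x y x' y' : Ω → ℕ}
    (hx : Measurable[m0] x) (hy : Measurable[m0] y) (hx' : Measurable[m0] x')
    (hy' : Measurable[m0] y')
    (hstep : ∀ᵐ ω ∂μ, IsUnitStep (x ω) (y ω) (x' ω) (y' ω)) (a b : ℝ) {p₁ p₂ p₃ p₄ : Ω → ℝ}
    (h₁ : μ[{ω | x' ω = x ω + 1 ∧ y' ω = y ω}.indicator (fun _ => (1 : ℝ)) | m] =ᵐ[μ] p₁)
    (h₂ : μ[{ω | x' ω = x ω ∧ y' ω = y ω + 1}.indicator (fun _ => (1 : ℝ)) | m] =ᵐ[μ] p₂)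
    (h₃ : μ[{ω | x' ω + 1 = x ω ∧ y' ω = y ω}.indicator (fun _ => (1 : ℝ)) | m] =ᵐ[μ] p₃)
    (h₄ : μ[{ω | x' ω = x ω ∧ y' ω + 1 = y ω}.indicator (fun _ => (1 : ℝ)) | m] =ᵐ[μ] p₄) :
    μ[fun ω => a * x' ω + b * y' ω - (a * x ω + b * y ω) | m] =ᵐ[μ]
      fun ω => a * p₁ ω + b * p₂ ω - a * p₃ ω - b * p₄ ω := by
  set f₁ := {ω | x' ω = x ω + 1 ∧ y' ω = y ω}.indicator (fun _ => (1 : ℝ))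
  set f₂ := {ω | x' ω = x ω ∧ y' ω = y ω + 1}.indicator (fun _ => (1 : ℝ))
  set f₃ := {ω | x' ω + 1 = x ω ∧ y' ω = y ω}.indicator (fun _ => (1 : ℝ))
  set f₄ := {ω | x' ω = x ω ∧ y' ω + 1 = y ω}.indicator (fun _ => (1 : ℝ))
  have hind : ∀ s, MeasurableSet[m0] s → Integrable (s.indicator fun _ => (1 : ℝ)) μ :=
    fun s hs => (integrable_const 1).indicator hs
  have hf₁ : Integrable (a • f₁) μ := (hind _ <|
    (measurableSet_eq_fun hx' (hx.add_const 1)).inter (measurableSet_eq_fun hy' hy)).smul a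
  have hf₂ : Integrable (b • f₂) μ := (hind _ <|
    (measurableSet_eq_fun hx' hx).inter (measurableSet_eq_fun hy' (hy.add_const 1))).smul b
  have hf₃ : Integrable (a • f₃) μ := (hind _ <|
    (measurableSet_eq_fun (hx'.add_const 1) hx).inter (measurableSet_eq_fun hy' hy)).smul a
  have hf₄ : Integrable (b • f₄) μ := (hind _ <|
    (measurableSet_eq_fun hx' hx).inter (measurableSet_eq_fun (hy'.add_const 1) hy)).smul b
  calc μ[fun ω => a * x' ω + b * y' ω - (a * x ω + b * y ω) | m]
      =ᵐ[μ] μ[a • f₁ + b • f₂ - a • f₃ - b • f₄ | m] := by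
        refine condExp_congr_ae ?_
        filter_upwards [hstep] with ω h
        simp only [h.linear_sub_eq, f₁, f₂, f₃, f₄, Pi.add_apply, Pi.sub_apply, Pi.smul_apply,
          smul_eq_mul, Set.indicator_apply, Set.mem_ofPred_eq]
    _ =ᵐ[μ] a • μ[f₁ | m] + b • μ[f₂ | m] - a • μ[f₃ | m] - b • μ[f₄ | m] := by
        refine (condExp_sub ((hf₁.add hf₂).sub hf₃) hf₄ m).trans ?_
        refine EventuallyEq.sub ?_ (condExp_smul b f₄ m)
        refine (condExp_sub (hf₁.add hf₂) hf₃ m).trans ?_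
        refine EventuallyEq.sub ?_ (condExp_smul a f₃ m)
        exact (condExp_add hf₁ hf₂ m).trans ((condExp_smul a f₁ m).add (condExp_smul b f₂ m))
    _ =ᵐ[μ] fun ω => a * p₁ ω + b * p₂ ω - a * p₃ ω - b * p₄ ω := by
        filter_upwards [h₁, h₂, h₃, h₄] with ω e₁ e₂ e₃ e₄
        simp [e₁, e₂, e₃, e₄]

theorem ae_tendsto_linear_sub_sum_drift_div {X Y : ℕ → Ω → ℕ}
    (hX : ∀ n, Measurable[ℱ n] (X n)) (hY : ∀ n, Measurable[ℱ n] (Y n))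
    (hstep : ∀ n, ∀ᵐ ω ∂μ, IsUnitStep (X n ω) (Y n ω) (X (n + 1) ω) (Y (n + 1) ω)) (a b : ℝ)
    {p₁ p₂ p₃ p₄ : ℕ → Ω → ℝ}
    (h₁ : ∀ n, μ[{ω | X (n + 1) ω = X n ω + 1 ∧ Y (n + 1) ω = Y n ω}.indicator
      (fun _ => (1 : ℝ)) | ℱ n] =ᵐ[μ] p₁ n)
    (h₂ : ∀ n, μ[{ω | X (n + 1) ω = X n ω ∧ Y (n + 1) ω = Y n ω + 1}.indicator
      (fun _ => (1 : ℝ)) | ℱ n] =ᵐ[μ] p₂ n)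
    (h₃ : ∀ n, μ[{ω | X (n + 1) ω + 1 = X n ω ∧ Y (n + 1) ω = Y n ω}.indicator
      (fun _ => (1 : ℝ)) | ℱ n] =ᵐ[μ] p₃ n)
    (h₄ : ∀ n, μ[{ω | X (n + 1) ω = X n ω ∧ Y (n + 1) ω + 1 = Y n ω}.indicator
      (fun _ => (1 : ℝ)) | ℱ n] =ᵐ[μ] p₄ n) :
    ∀ᵐ ω ∂μ, Tendsto (fun n => (a * X n ω + b * Y n ω -
      ∑ k ∈ range n, (a * p₁ k ω + b * p₂ k ω - a * p₃ k ω - b * p₄ k ω)) / n) atTop (𝓝 0) := by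
  set S : ℕ → Ω → ℝ := fun n ω => a * X n ω + b * Y n ω
  have hS : StronglyAdapted ℱ S := fun n =>
    (((measurable_from_top.comp (hX n)).const_mul a).add
      ((measurable_from_top.comp (hY n)).const_mul b)).stronglyMeasurable
  have hS_inc : ∀ n, ∀ᵐ ω ∂μ, |S (n + 1) ω - S n ω| ≤ |a| + |b| := fun n => by
    filter_upwards [hstep n] with ω h using h.abs_linear_sub_le a b
  have hXm : ∀ n, Measurable (X n) := fun n => (hX n).mono (ℱ.le n) le_rfl
  have hYm : ∀ n, Measurable (Y n) := fun n => (hY n).mono (ℱ.le n) le_rfl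
  have hdrift : ∀ n, μ[S (n + 1) - S n | ℱ n] =ᵐ[μ]
      fun ω => a * p₁ n ω + b * p₂ n ω - a * p₃ n ω - b * p₄ n ω := fun n =>
    condExp_linear_sub_ae_eq_of_isUnitStep (hXm n) (hYm n) (hXm (n + 1)) (hYm (n + 1)) (hstep n)
      a b (h₁ n) (h₂ n) (h₃ n) (h₄ n)
  filter_upwards [ae_tendsto_martingalePart_div_natCast_zero hS hS_inc, ae_all_iff.2 hdrift]
    with ω hω hpred
  refine hω.congr fun n => ?_
  simp only [martingalePart, predictablePart, Pi.sub_apply, Finset.sum_apply, hpred, S]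

end MeasureTheory

section Competition

variable {l₁ l₂ β₁ β₂ α₁ α₂ x y : ℝ}

theorem competition_drift_eq {w : ℝ} (hw : w = l₁ + α₁ * x + (l₂ + α₂ * y) + β₁ * y + β₂ * x)
    (hw0 : w ≠ 0) :
    (α₁ * α₂ + β₁ * β₂ + 2 * α₂ * β₂) * ((l₁ + α₁ * x) / w) +
        (α₁ * α₂ + β₁ * β₂ + 2 * α₁ * β₁) * ((l₂ + α₂ * y) / w) -
        (α₁ * α₂ + β₁ * β₂ + 2 * α₂ * β₂) * (β₁ * y / w) -
        (α₁ * α₂ + β₁ * β₂ + 2 * α₁ * β₁) * (β₂ * x / w) =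
      α₁ * α₂ - β₁ * β₂ + (2 * l₁ * β₂ * (β₁ + α₂) + 2 * l₂ * β₁ * (β₂ + α₁)) / w := by
  field_simp
  rw [hw]
  ring

theorem competition_linear_le_mul_rate (hl₁ : 0 ≤ l₁) (hl₂ : 0 ≤ l₂) (hβ₁ : 0 ≤ β₁)
    (hβ₂ : 0 ≤ β₂) (hα₁ : 0 ≤ α₁) (hα₂ : 0 ≤ α₂) (hx : 0 ≤ x) (hy : 0 ≤ y) :
    (α₁ * α₂ + β₁ * β₂ + 2 * α₂ * β₂) * x + (α₁ * α₂ + β₁ * β₂ + 2 * α₁ * β₁) * y ≤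
      (3 * (α₁ + α₂) + β₁ + β₂) * (l₁ + α₁ * x + (l₂ + α₂ * y) + β₁ * y + β₂ * x) := by
  have hdiff : (3 * (α₁ + α₂) + β₁ + β₂) * (l₁ + α₁ * x + (l₂ + α₂ * y) + β₁ * y + β₂ * x) -
      ((α₁ * α₂ + β₁ * β₂ + 2 * α₂ * β₂) * x + (α₁ * α₂ + β₁ * β₂ + 2 * α₁ * β₁) * y) =
      (3 * (α₁ + α₂) + β₁ + β₂) * (l₁ + l₂) +
        (3 * α₁ ^ 2 + 4 * α₁ * β₂ + 2 * α₁ * α₂ + α₂ * β₂ + α₁ * β₁ + β₂ ^ 2) * x +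
        (3 * α₂ ^ 2 + 4 * α₂ * β₁ + 2 * α₁ * α₂ + α₁ * β₁ + α₂ * β₂ + β₁ ^ 2) * y := by
    ring
  have : 0 ≤ (3 * (α₁ + α₂) + β₁ + β₂) * (l₁ + l₂) +
      (3 * α₁ ^ 2 + 4 * α₁ * β₂ + 2 * α₁ * α₂ + α₂ * β₂ + α₁ * β₁ + β₂ ^ 2) * x +
      (3 * α₂ ^ 2 + 4 * α₂ * β₁ + 2 * α₁ * α₂ + α₁ * β₁ + α₂ * β₂ + β₁ ^ 2) * y := by
    positivity
  linarith

end Competition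

theorem stmt_6_general
    {Ω : Type*} {m0 : MeasurableSpace Ω} (P : Measure Ω) [IsProbabilityMeasure P]
    (ℱ : Filtration ℕ m0)
    (l₁ l₂ β₁ β₂ α₁ α₂ : ℝ)
    (hl₁ : 0 < l₁) (hl₂ : 0 < l₂) (hβ₁ : 0 < β₁) (hβ₂ : 0 < β₂)
    (hα₁ : 0 ≤ α₁) (hα₂ : 0 ≤ α₂)
    (ζ₁ ζ₂ : ℕ → Ω → ℕ)
    (hζ₁meas : ∀ n, Measurable[ℱ n] (ζ₁ n)) (hζ₂meas : ∀ n, Measurable[ℱ n] (ζ₂ n))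
    (hstep : ∀ n, ∀ᵐ ω ∂P,
      (ζ₁ (n + 1) ω = ζ₁ n ω + 1 ∧ ζ₂ (n + 1) ω = ζ₂ n ω) ∨
      (ζ₁ (n + 1) ω = ζ₁ n ω ∧ ζ₂ (n + 1) ω = ζ₂ n ω + 1) ∨
      (ζ₁ (n + 1) ω + 1 = ζ₁ n ω ∧ ζ₂ (n + 1) ω = ζ₂ n ω) ∨
      (ζ₁ (n + 1) ω = ζ₁ n ω ∧ ζ₂ (n + 1) ω + 1 = ζ₂ n ω))
    (W : ℕ → Ω → ℝ)
    (hW : ∀ n ω, W n ω =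
      (l₁ + α₁ * (ζ₁ n ω : ℝ)) + (l₂ + α₂ * (ζ₂ n ω : ℝ)) +
      (if 1 ≤ ζ₁ n ω then β₁ * (ζ₂ n ω : ℝ) else 0) +
      (if 1 ≤ ζ₂ n ω then β₂ * (ζ₁ n ω : ℝ) else 0))
    (hright : ∀ n,
      P[({ω' | ζ₁ (n + 1) ω' = ζ₁ n ω' + 1 ∧ ζ₂ (n + 1) ω' = ζ₂ n ω'} : Set Ω).indicator
          (fun _ => (1 : ℝ)) | ℱ n]
        =ᵐ[P] fun ω => (l₁ + α₁ * (ζ₁ n ω : ℝ)) / W n ω)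
    (hupp : ∀ n,
      P[({ω' | ζ₁ (n + 1) ω' = ζ₁ n ω' ∧ ζ₂ (n + 1) ω' = ζ₂ n ω' + 1} : Set Ω).indicator
          (fun _ => (1 : ℝ)) | ℱ n]
        =ᵐ[P] fun ω => (l₂ + α₂ * (ζ₂ n ω : ℝ)) / W n ω)
    (hleft : ∀ n,
      P[({ω' | ζ₁ (n + 1) ω' + 1 = ζ₁ n ω' ∧ ζ₂ (n + 1) ω' = ζ₂ n ω'} : Set Ω).indicator
          (fun _ => (1 : ℝ)) | ℱ n]
        =ᵐ[P] fun ω => (if 1 ≤ ζ₁ n ω then β₁ * (ζ₂ n ω : ℝ) else 0) / W n ω)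
    (hdownp : ∀ n,
      P[({ω' | ζ₁ (n + 1) ω' = ζ₁ n ω' ∧ ζ₂ (n + 1) ω' + 1 = ζ₂ n ω'} : Set Ω).indicator
          (fun _ => (1 : ℝ)) | ℱ n]
        =ᵐ[P] fun ω => (if 1 ≤ ζ₂ n ω then β₂ * (ζ₁ n ω : ℝ) else 0) / W n ω)
    (hab : β₁ * β₂ < α₁ * α₂)
    (S : ℕ → Ω → ℝ)
    (hS : ∀ n ω, S n ω = (α₁ * α₂ + β₁ * β₂ + 2 * α₂ * β₂) * (ζ₁ n ω : ℝ) +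
      (α₁ * α₂ + β₁ * β₂ + 2 * α₁ * β₁) * (ζ₂ n ω : ℝ)) :
    ∀ᵐ ω ∂P, (∀ n, ζ₁ n ω ≠ 0 ∧ ζ₂ n ω ≠ 0) →
      Tendsto (fun n : ℕ => S n ω / (n : ℝ)) atTop (nhds (α₁ * α₂ - β₁ * β₂)) := by
  have hρ : 0 < α₁ * α₂ - β₁ * β₂ := sub_pos.2 hab
  filter_upwards [ae_tendsto_linear_sub_sum_drift_div hζ₁meas hζ₂meas hstep _ _
    hright hupp hleft hdownp] with ω hω hsurv
  have hpos : ∀ k, 1 ≤ ζ₁ k ω ∧ 1 ≤ ζ₂ k ω := fun k =>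
    ⟨Nat.one_le_iff_ne_zero.2 (hsurv k).1, Nat.one_le_iff_ne_zero.2 (hsurv k).2⟩
  have hWk : ∀ k, W k ω = l₁ + α₁ * ζ₁ k ω + (l₂ + α₂ * ζ₂ k ω) + β₁ * ζ₂ k ω + β₂ * ζ₁ k ω :=
    fun k => by rw [hW, if_pos (hpos k).1, if_pos (hpos k).2]
  have hW0 : ∀ k, 0 < W k ω := fun k => by rw [hWk]; positivity
  simp only [hS]
  refine tendsto_div_natCast_of_tendsto_sub_sum_div_of_le_mul hρ
    (c := 2 * l₁ * β₂ * (β₁ + α₂) + 2 * l₂ * β₁ * (β₂ + α₁)) (by positivity)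
    (by positivity : 0 < 3 * (α₁ + α₂) + β₁ + β₂) (fun k => (hW0 k).le)
    (fun k => hWk k ▸ competition_linear_le_mul_rate hl₁.le hl₂.le hβ₁.le hβ₂.le hα₁ hα₂
      (Nat.cast_nonneg _) (Nat.cast_nonneg _)) (hω.congr fun n => ?_)
  congr 2
  refine sum_congr rfl fun k _ => ?_
  simp only [if_pos (hpos k).1, if_pos (hpos k).2]
  exact competition_drift_eq (hWk k) (hW0 k).ne'

/-- Proposition on the law of large numbers for `Sₙ`.
For the discrete-time competition process with linear interaction, if `α₁α₂ > β₁β₂`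
then, almost surely on the event `{τ = ∞}` (the process never hits the coordinate axes),
`Sₙ/n → ρ̃ = α₁α₂ − β₁β₂` as `n → ∞`. -/
theorem stmt_6
    {Ω : Type*} {m0 : MeasurableSpace Ω} (P : Measure Ω) [IsProbabilityMeasure P]
    (ℱ : Filtration ℕ m0)
    (l₁ l₂ β₁ β₂ α₁ α₂ : ℝ)
    (hl₁ : 0 < l₁) (hl₂ : 0 < l₂) (hβ₁ : 0 < β₁) (hβ₂ : 0 < β₂)
    (hα₁ : 0 ≤ α₁) (hα₂ : 0 ≤ α₂)
    (ζ₁ ζ₂ : ℕ → Ω → ℕ)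
    (hζ₁meas : ∀ n, Measurable[ℱ n] (ζ₁ n)) (hζ₂meas : ∀ n, Measurable[ℱ n] (ζ₂ n))
    (x₀ y₀ : ℕ) (hinit : ∀ ω, ζ₁ 0 ω = x₀ ∧ ζ₂ 0 ω = y₀)
    (hstep : ∀ n, ∀ᵐ ω ∂P,
      (ζ₁ (n + 1) ω = ζ₁ n ω + 1 ∧ ζ₂ (n + 1) ω = ζ₂ n ω) ∨
      (ζ₁ (n + 1) ω = ζ₁ n ω ∧ ζ₂ (n + 1) ω = ζ₂ n ω + 1) ∨
      (ζ₁ (n + 1) ω + 1 = ζ₁ n ω ∧ ζ₂ (n + 1) ω = ζ₂ n ω) ∨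
      (ζ₁ (n + 1) ω = ζ₁ n ω ∧ ζ₂ (n + 1) ω + 1 = ζ₂ n ω))
    (W : ℕ → Ω → ℝ)
    (hW : ∀ n ω, W n ω =
      (l₁ + α₁ * (ζ₁ n ω : ℝ)) + (l₂ + α₂ * (ζ₂ n ω : ℝ)) +
      (if 1 ≤ ζ₁ n ω then β₁ * (ζ₂ n ω : ℝ) else 0) +
      (if 1 ≤ ζ₂ n ω then β₂ * (ζ₁ n ω : ℝ) else 0))
    (hright : ∀ n,
      P[({ω' | ζ₁ (n + 1) ω' = ζ₁ n ω' + 1 ∧ ζ₂ (n + 1) ω' = ζ₂ n ω'} : Set Ω).indicator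
          (fun _ => (1 : ℝ)) | ℱ n]
        =ᵐ[P] fun ω => (l₁ + α₁ * (ζ₁ n ω : ℝ)) / W n ω)
    (hupp : ∀ n,
      P[({ω' | ζ₁ (n + 1) ω' = ζ₁ n ω' ∧ ζ₂ (n + 1) ω' = ζ₂ n ω' + 1} : Set Ω).indicator
          (fun _ => (1 : ℝ)) | ℱ n]
        =ᵐ[P] fun ω => (l₂ + α₂ * (ζ₂ n ω : ℝ)) / W n ω)
    (hleft : ∀ n,
      P[({ω' | ζ₁ (n + 1) ω' + 1 = ζ₁ n ω' ∧ ζ₂ (n + 1) ω' = ζ₂ n ω'} : Set Ω).indicator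
          (fun _ => (1 : ℝ)) | ℱ n]
        =ᵐ[P] fun ω => (if 1 ≤ ζ₁ n ω then β₁ * (ζ₂ n ω : ℝ) else 0) / W n ω)
    (hdownp : ∀ n,
      P[({ω' | ζ₁ (n + 1) ω' = ζ₁ n ω' ∧ ζ₂ (n + 1) ω' + 1 = ζ₂ n ω'} : Set Ω).indicator
          (fun _ => (1 : ℝ)) | ℱ n]
        =ᵐ[P] fun ω => (if 1 ≤ ζ₂ n ω then β₂ * (ζ₁ n ω : ℝ) else 0) / W n ω)
    (hab : β₁ * β₂ < α₁ * α₂)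
    (S : ℕ → Ω → ℝ)
    (hS : ∀ n ω, S n ω = (α₁ * α₂ + β₁ * β₂ + 2 * α₂ * β₂) * (ζ₁ n ω : ℝ) +
      (α₁ * α₂ + β₁ * β₂ + 2 * α₁ * β₁) * (ζ₂ n ω : ℝ)) :
    ∀ᵐ ω ∂P, (∀ n, ζ₁ n ω ≠ 0 ∧ ζ₂ n ω ≠ 0) →
      Tendsto (fun n : ℕ => S n ω / (n : ℝ)) atTop (nhds (α₁ * α₂ - β₁ * β₂)) :=
  stmt_6_general P ℱ l₁ l₂ β₁ β₂ α₁ α₂ hl₁ hl₂ hβ₁ hβ₂ hα₁ hα₂ ζ₁ ζ₂ hζ₁meas hζ₂meas hstep W hW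
    hright hupp hleft hdownp hab S hS
end

section
/- Suppose α₁ ≥ α₂ and α₁α₂ > β₁β₂. Then almost surely on the event {τ = ∞}, limsup_{n→∞} R_n/n < α₁ + rβ₂. -/
/-!
On the survival event both coordinates stay positive, so the normalising weight `W` equals `R`
and the conditional drift of `R` is
`((α₁+β₂)(λ₁ + α₁ζ₁ - β₁ζ₂) + (α₂+β₁)(λ₂ + α₂ζ₂ - β₂ζ₁)) / R ≤ max α₁ α₂ + C / R`
with `C = (α₁+β₂)λ₁ + (α₂+β₁)λ₂`.
The martingale part of `R` has bounded increments, hence is `o(n)` almost surely (second moments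
along the squares, Borel–Cantelli, and interpolation between consecutive squares). Since the drift
exceeds `max α₁ α₂` only by `C / R`, a deterministic comparison gives
`limsup R n / n ≤ max α₁ α₂`, and `max α₁ α₂ < α₁ + rβ₂` because
`rβ₂ = (α₂ - α₁ + √((α₁ - α₂)² + 4β₁β₂)) / 2 > max 0 (α₂ - α₁)`.
-/

open MeasureTheory Filter Topology Finset

/- `R n - M n - D * n` does not increase while `R n ≥ A`, and one step after a time with
`R n < A` it is below `A + c`. -/
theorem sub_sub_mul_le_max_of_drift_le {R M d : ℕ → ℝ} {A c D : ℝ} {N : ℕ}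
    (hRM : ∀ n, R (n + 1) - R n = M (n + 1) - M n + d n)
    (hjump : ∀ n, R (n + 1) ≤ R n + c)
    (hd : ∀ n, A ≤ R n → d n ≤ D)
    (hM : ∀ n, N ≤ n → -M n ≤ D * n) :
    ∀ n, N ≤ n → R n - M n - D * n ≤ max (R N - M N - D * N) (A + c) := by
  intro n hn
  induction n, hn using Nat.le_induction with
  | base => exact le_max_left _ _
  | succ n hn ih =>
    have hMn := hM (n + 1) (by omega)
    push_cast at hMn ⊢
    rcases le_or_gt A (R n) with hA | hA
    · linarith [hRM n, hd n hA]
    · exact le_max_of_le_right (by linarith [hjump n])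

theorem limsup_div_le_of_drift_le {R M d : ℕ → ℝ} {c C K : ℝ} (hK : 0 ≤ K)
    (hR : ∀ n, 0 < R n)
    (hRM : ∀ n, R (n + 1) - R n = M (n + 1) - M n + d n)
    (hjump : ∀ n, R (n + 1) ≤ R n + c)
    (hd : ∀ n, d n ≤ K + C / R n)
    (hM : Tendsto (fun n => M n / n) atTop (𝓝 0)) :
    limsup (fun n => R n / n) atTop ≤ K := by
  have hcobdd : IsCoboundedUnder (· ≤ ·) atTop (fun n => R n / n) :=
    isCoboundedUnder_le_of_le atTop fun n => div_nonneg (hR n).le n.cast_nonneg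
  refine le_of_forall_pos_le_add fun ε hε => limsup_le_of_le hcobdd ?_
  obtain ⟨N, hN⟩ := eventually_atTop.mp
    ((hM.eventually (Metric.closedBall_mem_nhds 0 (by positivity : 0 < ε / 3))).and
      (eventually_ge_atTop 1))
  have hMN : ∀ n, N ≤ n → |M n| ≤ ε / 3 * n := by
    intro n hn
    obtain ⟨hball, hn1⟩ := hN n hn
    have hn0 : (0 : ℝ) < n := by exact_mod_cast hn1
    rwa [dist_zero_right, Real.norm_eq_abs, abs_div, Nat.abs_cast, div_le_iff₀ hn0] at hball
  have hdrift : ∀ n, C / (ε / 3) ≤ R n → d n ≤ K + ε / 3 := by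
    intro n hn
    have : C / R n ≤ ε / 3 := by
      rw [div_le_iff₀ (hR n)]
      rwa [div_le_iff₀' (by positivity)] at hn
    linarith [hd n]
  obtain ⟨Q, hcomp⟩ : ∃ Q, ∀ n, N ≤ n → R n - M n - (K + ε / 3) * n ≤ Q :=
    ⟨_, sub_sub_mul_le_max_of_drift_le hRM hjump hdrift fun n hn => by
      nlinarith [abs_le.mp (hMN n hn), (n.cast_nonneg : (0 : ℝ) ≤ n)]⟩
  obtain ⟨N', hN'⟩ := exists_nat_ge (Q / (ε / 3))
  filter_upwards [eventually_ge_atTop (max N (max N' 1))] with n hn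
  have hn0 : (0 : ℝ) < n := by exact_mod_cast (by omega : 0 < n)
  have hQ : Q ≤ ε / 3 * n := by
    rw [div_le_iff₀ (by positivity)] at hN'
    nlinarith [(show (N' : ℝ) ≤ n by exact_mod_cast (by omega : N' ≤ n))]
  rw [div_le_iff₀ hn0]
  linarith [hcomp n (by omega), abs_le.mp (hMN n (by omega))]

theorem abs_sub_le_mul_of_abs_succ_sub_le {u : ℕ → ℝ} {c : ℝ}
    (hu : ∀ n, |u (n + 1) - u n| ≤ c) (m j : ℕ) : |u (m + j) - u m| ≤ c * j := by
  induction j with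
  | zero => simp
  | succ j ih =>
    push_cast
    calc |u (m + (j + 1)) - u m| ≤ |u (m + j + 1) - u (m + j)| + |u (m + j) - u m| :=
          abs_sub_le _ _ _
      _ ≤ c * (j + 1) := by linarith [hu (m + j)]

theorem tendsto_div_of_tendsto_div_sq {u : ℕ → ℝ} {c : ℝ}
    (hu : ∀ n, |u (n + 1) - u n| ≤ c)
    (hsq : Tendsto (fun k : ℕ => u (k ^ 2) / (k ^ 2 : ℕ)) atTop (𝓝 0)) :
    Tendsto (fun n : ℕ => u n / n) atTop (𝓝 0) := by
  have hsqrt : Tendsto Nat.sqrt atTop atTop :=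
    tendsto_atTop_atTop.mpr fun k => ⟨k ^ 2, fun n hn => Nat.le_sqrt'.mpr hn⟩
  have hbound : Tendsto (fun n : ℕ => |u (n.sqrt ^ 2) / (n.sqrt ^ 2 : ℕ)| + 2 * c / n.sqrt)
      atTop (𝓝 0) := by
    simpa [Function.comp_def] using
      (hsq.abs.add (tendsto_const_div_atTop_nhds_zero_nat (2 * c))).comp hsqrt
  refine squeeze_zero_norm' ?_ hbound
  filter_upwards [eventually_ge_atTop 1] with n hn
  set k := n.sqrt
  have hk : 1 ≤ k := Nat.le_sqrt'.mpr (by simpa using hn)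
  have hkn : k ^ 2 ≤ n := Nat.sqrt_le' n
  have hnk : n < (k + 1) ^ 2 := Nat.lt_succ_sqrt' n
  have hk0 : (0 : ℝ) < k := by exact_mod_cast hk
  have hgap : ((n - k ^ 2 : ℕ) : ℝ) ≤ 2 * k := by
    have : (k + 1) ^ 2 = k ^ 2 + 2 * k + 1 := by ring
    exact_mod_cast (by omega : n - k ^ 2 ≤ 2 * k)
  have hstep := abs_sub_le_mul_of_abs_succ_sub_le hu (k ^ 2) (n - k ^ 2)
  rw [Nat.add_sub_cancel' hkn] at hstep
  have hc : 0 ≤ c := (abs_nonneg _).trans (hu 0)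
  have hkn' : ((k ^ 2 : ℕ) : ℝ) ≤ n := by exact_mod_cast hkn
  have hnum : |u n| ≤ |u (k ^ 2)| + 2 * c * k := by
    nlinarith [abs_sub_abs_le_abs_sub (u n) (u (k ^ 2))]
  calc ‖u n / n‖ = |u n| / n := by rw [Real.norm_eq_abs, abs_div, Nat.abs_cast]
    _ ≤ (|u (k ^ 2)| + 2 * c * k) / ((k ^ 2 : ℕ) : ℝ) :=
        div_le_div₀ (by positivity) hnum (by positivity) hkn'
    _ = |u (k ^ 2) / (k ^ 2 : ℕ)| + 2 * c / k := by
        rw [abs_div, Nat.abs_cast]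
        push_cast
        field_simp

section Martingale

variable {Ω : Type*} {m0 : MeasurableSpace Ω} {P : Measure Ω} {ℱ : Filtration ℕ m0}
  {Δ : ℕ → Ω → ℝ} {c : ℝ}

theorem integral_mul_eq_zero_of_condExp_eq_zero {m : MeasurableSpace Ω} (hm : m ≤ m0)
    [SigmaFinite (P.trim hm)] {g f : Ω → ℝ} (hg : StronglyMeasurable[m] g)
    (hgf : Integrable (g * f) P) (hf : Integrable f P) (hf0 : P[f | m] =ᵐ[P] 0) :
    ∫ ω, g ω * f ω ∂P = 0 := by
  have hcond : P[g * f | m] =ᵐ[P] 0 := by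
    filter_upwards [condExp_mul_of_stronglyMeasurable_left hg hgf hf, hf0] with ω h1 h2
    simp [h1, h2]
  calc ∫ ω, g ω * f ω ∂P = ∫ ω, (P[g * f | m]) ω ∂P := (integral_condExp hm).symm
    _ = 0 := by simp [integral_congr_ae hcond]

theorem measureReal_le_abs_le_integral_sq_div {X : Ω → ℝ} (hX : Integrable (fun ω => X ω ^ 2) P)
    {t : ℝ} (ht : 0 < t) : P.real {ω | t ≤ |X ω|} ≤ (∫ ω, X ω ^ 2 ∂P) / t ^ 2 := by
  have hset : {ω | t ≤ |X ω|} = {ω | t ^ 2 ≤ X ω ^ 2} := by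
    ext ω
    simp only [Set.mem_ofPred_eq, ← sq_abs (X ω)]
    exact (pow_le_pow_iff_left₀ ht.le (abs_nonneg _) two_ne_zero).symm
  rw [hset, le_div_iff₀ (by positivity), mul_comm]
  exact mul_meas_ge_le_integral_of_nonneg (ae_of_all _ fun ω => sq_nonneg _) hX _

theorem ae_tendsto_zero_of_forall_ae_eventually_abs_lt {X : ℕ → Ω → ℝ}
    (h : ∀ ε > 0, ∀ᵐ ω ∂P, ∀ᶠ n in atTop, |X n ω| < ε) :
    ∀ᵐ ω ∂P, Tendsto (fun n => X n ω) atTop (𝓝 0) := by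
  filter_upwards [ae_all_iff.mpr fun j : ℕ => h (1 / (j + 1)) Nat.one_div_pos_of_nat]
    with ω hω
  refine Metric.tendsto_nhds.mpr fun ε hε => ?_
  obtain ⟨j, hj⟩ := exists_nat_one_div_lt hε
  filter_upwards [hω j] with n hn
  rw [Real.dist_0_eq_abs]
  exact hn.trans hj

theorem ae_abs_sum_range_le (hbdd : ∀ n, ∀ᵐ ω ∂P, |Δ n ω| ≤ c) (n : ℕ) :
    ∀ᵐ ω ∂P, |∑ k ∈ range n, Δ k ω| ≤ c * n := by
  filter_upwards [ae_all_iff.mpr hbdd] with ω hω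
  calc |∑ k ∈ range n, Δ k ω| ≤ ∑ k ∈ range n, |Δ k ω| := abs_sum_le_sum_abs _ _
    _ ≤ ∑ _k ∈ range n, c := sum_le_sum fun k _ => hω k
    _ = c * n := by simp [mul_comm]

theorem stronglyMeasurable_sum_range (hΔ : ∀ n, StronglyMeasurable[ℱ (n + 1)] (Δ n)) (n : ℕ) :
    StronglyMeasurable[ℱ n] (fun ω => ∑ k ∈ range n, Δ k ω) :=
  Finset.stronglyMeasurable_fun_sum _ fun k hk => (hΔ k).mono (ℱ.mono (Finset.mem_range.mp hk))

theorem integral_sq_sum_range_le_of_condExp_eq_zero [IsProbabilityMeasure P]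
    (hΔ : ∀ n, StronglyMeasurable[ℱ (n + 1)] (Δ n)) (hbdd : ∀ n, ∀ᵐ ω ∂P, |Δ n ω| ≤ c)
    (hcond : ∀ n, P[Δ n | ℱ n] =ᵐ[P] 0) (n : ℕ) :
    ∫ ω, (∑ k ∈ range n, Δ k ω) ^ 2 ∂P ≤ c ^ 2 * n := by
  set M : ℕ → Ω → ℝ := fun n ω => ∑ k ∈ range n, Δ k ω
  have hMmeas : ∀ n, StronglyMeasurable[ℱ n] (M n) := stronglyMeasurable_sum_range hΔ
  have hMbdd : ∀ n, ∀ᵐ ω ∂P, |M n ω| ≤ c * n := ae_abs_sum_range_le hbdd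
  have hΔint : ∀ n, Integrable (Δ n) P := fun n =>
    .of_bound ((hΔ n).mono (ℱ.le _)).aestronglyMeasurable c (by simpa using hbdd n)
  have hMint : ∀ n, Integrable (M n) P := fun n =>
    .of_bound ((hMmeas n).mono (ℱ.le _)).aestronglyMeasurable _ (by simpa using hMbdd n)
  induction n with
  | zero => simp
  | succ n ih =>
    have hMΔ : Integrable (fun ω => M n ω * Δ n ω) P :=
      (hΔint n).bdd_mul ((hMmeas n).mono (ℱ.le _)).aestronglyMeasurable
        (by simpa using hMbdd n)
    have hMM : Integrable (fun ω => M n ω * M n ω) P :=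
      (hMint n).bdd_mul ((hMmeas n).mono (ℱ.le _)).aestronglyMeasurable
        (by simpa using hMbdd n)
    have hΔΔ : Integrable (fun ω => Δ n ω * Δ n ω) P :=
      (hΔint n).bdd_mul ((hΔ n).mono (ℱ.le _)).aestronglyMeasurable (by simpa using hbdd n)
    have horth : ∫ ω, M n ω * Δ n ω ∂P = 0 :=
      integral_mul_eq_zero_of_condExp_eq_zero (ℱ.le n) (hMmeas n) hMΔ (hΔint n) (hcond n)
    have hΔsq : ∫ ω, Δ n ω * Δ n ω ∂P ≤ c ^ 2 := by
      refine (integral_mono_ae hΔΔ (integrable_const (c ^ 2)) ?_).trans (by simp)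
      filter_upwards [hbdd n] with ω hω
      nlinarith [abs_mul_abs_self (Δ n ω), abs_nonneg (Δ n ω)]
    have hexp : ∀ ω, (∑ k ∈ range (n + 1), Δ k ω) ^ 2 =
        M n ω * M n ω + (2 * (M n ω * Δ n ω) + Δ n ω * Δ n ω) := fun ω => by
      rw [sum_range_succ]; ring
    simp only [hexp]
    rw [integral_add hMM (by exact (hMΔ.const_mul 2).add hΔΔ),
      integral_add (by exact hMΔ.const_mul 2) hΔΔ, integral_const_mul, horth]
    have ih' : ∫ ω, M n ω * M n ω ∂P ≤ c ^ 2 * n := by simpa [sq] using ih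
    push_cast
    linarith

theorem ae_tendsto_sum_range_sq_div_of_condExp_eq_zero [IsProbabilityMeasure P]
    (hΔ : ∀ n, StronglyMeasurable[ℱ (n + 1)] (Δ n)) (hbdd : ∀ n, ∀ᵐ ω ∂P, |Δ n ω| ≤ c)
    (hcond : ∀ n, P[Δ n | ℱ n] =ᵐ[P] 0) :
    ∀ᵐ ω ∂P, Tendsto (fun k : ℕ => (∑ i ∈ range (k ^ 2), Δ i ω) / (k ^ 2 : ℕ)) atTop (𝓝 0) := by
  refine ae_tendsto_zero_of_forall_ae_eventually_abs_lt fun ε hε => ?_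
  set s : ℕ → Set Ω := fun k => {ω | ε * ((k + 1) ^ 2 : ℕ) ≤ |∑ i ∈ range ((k + 1) ^ 2), Δ i ω|}
  have hs : ∀ k, P (s k) ≤ ENNReal.ofReal (c ^ 2 / ε ^ 2 * (1 / ((k + 1 : ℕ) : ℝ) ^ 2)) := by
    intro k
    have hint : Integrable (fun ω => (∑ i ∈ range ((k + 1) ^ 2), Δ i ω) ^ 2) P := by
      have hmeas := ((stronglyMeasurable_sum_range hΔ ((k + 1) ^ 2)).mono (ℱ.le _)).pow 2
      refine .of_bound hmeas.aestronglyMeasurable ((c * (((k + 1) ^ 2 : ℕ) : ℝ)) ^ 2) ?_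
      filter_upwards [ae_abs_sum_range_le hbdd ((k + 1) ^ 2)] with ω hω
      simpa [Real.norm_eq_abs, abs_pow] using pow_le_pow_left₀ (abs_nonneg _) hω 2
    rw [← ofReal_measureReal]
    refine ENNReal.ofReal_le_ofReal ((measureReal_le_abs_le_integral_sq_div hint
      (by positivity)).trans ?_)
    rw [div_le_iff₀ (by positivity)]
    calc _ ≤ c ^ 2 * ((k + 1) ^ 2 : ℕ) :=
          integral_sq_sum_range_le_of_condExp_eq_zero hΔ hbdd hcond _
      _ = _ := by push_cast; field_simp
  have hsum : ∑' k, P (s k) ≠ ⊤ :=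
    ne_top_of_le_ne_top
      ((((summable_nat_add_iff 1).mpr (Real.summable_one_div_nat_pow.mpr one_lt_two)).mul_left
        (c ^ 2 / ε ^ 2)).tsum_ofReal_ne_top) (ENNReal.tsum_le_tsum hs)
  filter_upwards [ae_eventually_notMem hsum] with ω hω
  obtain ⟨N, hN⟩ := eventually_atTop.mp hω
  filter_upwards [eventually_ge_atTop (N + 1)] with n hn
  obtain ⟨k, rfl⟩ : ∃ k, n = k + 1 := ⟨n - 1, by omega⟩
  have hk := hN k (by omega)
  simp only [s, Set.mem_ofPred_eq, not_le] at hk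
  rwa [abs_div, Nat.abs_cast, div_lt_iff₀ (by positivity)]

theorem ae_tendsto_sum_range_div_of_condExp_eq_zero [IsProbabilityMeasure P]
    (hΔ : ∀ n, StronglyMeasurable[ℱ (n + 1)] (Δ n)) (hbdd : ∀ n, ∀ᵐ ω ∂P, |Δ n ω| ≤ c)
    (hcond : ∀ n, P[Δ n | ℱ n] =ᵐ[P] 0) :
    ∀ᵐ ω ∂P, Tendsto (fun n : ℕ => (∑ i ∈ range n, Δ i ω) / n) atTop (𝓝 0) := by
  filter_upwards [ae_tendsto_sum_range_sq_div_of_condExp_eq_zero hΔ hbdd hcond,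
    ae_all_iff.mpr hbdd] with ω hsq hω
  exact tendsto_div_of_tendsto_div_sq (fun n => by simpa [sum_range_succ] using hω n) hsq

end Martingale

theorem ae_limsup_div_le_of_condExp_le {Ω : Type*} {m0 : MeasurableSpace Ω} {P : Measure Ω}
    [IsProbabilityMeasure P] {ℱ : Filtration ℕ m0} {R : ℕ → Ω → ℝ} {c K C : ℝ}
    {p : Ω → Prop} (hK : 0 ≤ K) (hRmeas : ∀ n, StronglyMeasurable[ℱ n] (R n))
    (hRpos : ∀ n ω, 0 < R n ω) (hjump : ∀ n, ∀ᵐ ω ∂P, |R (n + 1) ω - R n ω| ≤ c)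
    (hdrift : ∀ n, ∀ᵐ ω ∂P, p ω → P[fun ω => R (n + 1) ω - R n ω | ℱ n] ω ≤ K + C / R n ω) :
    ∀ᵐ ω ∂P, p ω → limsup (fun n => R n ω / n) atTop ≤ K := by
  set d : ℕ → Ω → ℝ := fun n => P[fun ω => R (n + 1) ω - R n ω | ℱ n]
  have hinc : ∀ n, StronglyMeasurable[ℱ (n + 1)] (fun ω => R (n + 1) ω - R n ω) := fun n =>
    (hRmeas (n + 1)).sub ((hRmeas n).mono (ℱ.mono n.le_succ))
  have hinc_int : ∀ n, Integrable (fun ω => R (n + 1) ω - R n ω) P := fun n =>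
    .of_bound ((hinc n).mono (ℱ.le _)).aestronglyMeasurable c (hjump n)
  have hΔmeas : ∀ n, StronglyMeasurable[ℱ (n + 1)] (fun ω => R (n + 1) ω - R n ω - d n ω) :=
    fun n => (hinc n).sub (stronglyMeasurable_condExp.mono (ℱ.mono n.le_succ))
  have hΔbdd : ∀ n, ∀ᵐ ω ∂P, |R (n + 1) ω - R n ω - d n ω| ≤ 2 * c := fun n => by
    filter_upwards [hjump n, ae_bdd_abs_condExp_of_ae_bdd_abs (m := ℱ n) (hjump n)] with ω h1 h2
    linarith [abs_sub (R (n + 1) ω - R n ω) (d n ω)]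
  have hΔcond : ∀ n, P[fun ω => R (n + 1) ω - R n ω - d n ω | ℱ n] =ᵐ[P] 0 := fun n => by
    have hdn : P[d n | ℱ n] = d n :=
      condExp_of_stronglyMeasurable (ℱ.le n) stronglyMeasurable_condExp integrable_condExp
    filter_upwards [condExp_sub (hinc_int n) (integrable_condExp : Integrable (d n) P) (ℱ n)]
      with ω h
    refine h.trans ?_
    rw [Pi.sub_apply, hdn, sub_self, Pi.zero_apply]
  filter_upwards [ae_tendsto_sum_range_div_of_condExp_eq_zero hΔmeas hΔbdd hΔcond,
    ae_all_iff.mpr hjump, ae_all_iff.mpr hdrift] with ω hM hj hd hp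
  refine limsup_div_le_of_drift_le (c := c) hK (hRpos · ω) (d := fun n => d n ω) (fun n => ?_)
    (fun n => by linarith [(abs_le.mp (hj n)).2]) (hd · hp) hM
  simp only [sum_range_succ]
  ring

def IsLatticeStep (x y x' y' : ℕ) : Prop :=
  (x' = x + 1 ∧ y' = y) ∨ (x' = x ∧ y' = y + 1) ∨ (x' + 1 = x ∧ y' = y) ∨ (x' = x ∧ y' + 1 = y)

namespace IsLatticeStep

variable {x y x' y' : ℕ}

theorem linear_sub_eq (h : IsLatticeStep x y x' y') (a b : ℝ) :
    a * x' + b * y' - (a * x + b * y) =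
      a * ((if x' = x + 1 ∧ y' = y then 1 else 0) - (if x' + 1 = x ∧ y' = y then 1 else 0)) +
      b * ((if x' = x ∧ y' = y + 1 then 1 else 0) - (if x' = x ∧ y' + 1 = y then 1 else 0)) := by
  rcases h with ⟨rfl, rfl⟩ | ⟨rfl, rfl⟩ | ⟨rfl, rfl⟩ | ⟨rfl, rfl⟩ <;> simp [add_assoc] <;> ring

theorem abs_linear_sub_le (h : IsLatticeStep x y x' y') {a b : ℝ} (ha : 0 ≤ a) (hb : 0 ≤ b) :
    |a * x' + b * y' - (a * x + b * y)| ≤ a + b := by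
  rcases h with ⟨rfl, rfl⟩ | ⟨rfl, rfl⟩ | ⟨rfl, rfl⟩ | ⟨rfl, rfl⟩ <;> push_cast <;>
    rw [abs_le] <;> constructor <;> linarith

end IsLatticeStep

theorem condExp_linear_sub_ae_eq_of_isLatticeStep {Ω : Type*} {m m0 : MeasurableSpace Ω}
    {P : Measure Ω} [IsFiniteMeasure P] {x y x' y' : Ω → ℕ} (hx : Measurable x)
    (hy : Measurable y) (hx' : Measurable x') (hy' : Measurable y')
    (hstep : ∀ᵐ ω ∂P, IsLatticeStep (x ω) (y ω) (x' ω) (y' ω)) (a b : ℝ) :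
    P[fun ω => a * x' ω + b * y' ω - (a * x ω + b * y ω) | m] =ᵐ[P]
      a • (P[{ω | x' ω = x ω + 1 ∧ y' ω = y ω}.indicator (fun _ => 1) | m] -
          P[{ω | x' ω + 1 = x ω ∧ y' ω = y ω}.indicator (fun _ => 1) | m]) +
        b • (P[{ω | x' ω = x ω ∧ y' ω = y ω + 1}.indicator (fun _ => 1) | m] -
          P[{ω | x' ω = x ω ∧ y' ω + 1 = y ω}.indicator (fun _ => 1) | m]) := by
  have hI : ∀ {S : Set Ω}, MeasurableSet S → Integrable (S.indicator fun _ => (1 : ℝ)) P :=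
    fun hS => (integrable_const 1).indicator hS
  have h₁ := hI (S := {ω | x' ω = x ω + 1 ∧ y' ω = y ω}) (by measurability)
  have h₂ := hI (S := {ω | x' ω = x ω ∧ y' ω = y ω + 1}) (by measurability)
  have h₃ := hI (S := {ω | x' ω + 1 = x ω ∧ y' ω = y ω}) (by measurability)
  have h₄ := hI (S := {ω | x' ω = x ω ∧ y' ω + 1 = y ω}) (by measurability)
  have hincr : (fun ω => a * x' ω + b * y' ω - (a * x ω + b * y ω)) =ᵐ[P]
      a • ({ω | x' ω = x ω + 1 ∧ y' ω = y ω}.indicator (fun _ => 1) -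
          {ω | x' ω + 1 = x ω ∧ y' ω = y ω}.indicator (fun _ => 1)) +
        b • ({ω | x' ω = x ω ∧ y' ω = y ω + 1}.indicator (fun _ => 1) -
          {ω | x' ω = x ω ∧ y' ω + 1 = y ω}.indicator (fun _ => 1)) := by
    filter_upwards [hstep] with ω h
    rw [h.linear_sub_eq]
    simp [Set.indicator_apply]
  exact (condExp_congr_ae hincr).trans <|
    (condExp_add ((h₁.sub h₃).smul a) ((h₂.sub h₄).smul b) m).trans <|
      ((condExp_smul a _ m).add (condExp_smul b _ m)).trans <|
        ((condExp_sub h₁ h₃ m).const_smul a).add ((condExp_sub h₂ h₄ m).const_smul b)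

theorem linear_drift_le_max_add_div {l₁ l₂ α₁ α₂ β₁ β₂ x y W : ℝ} (hl : 0 < l₁ + l₂)
    (hα₁ : 0 ≤ α₁) (hα₂ : 0 ≤ α₂) (hβ₁ : 0 ≤ β₁) (hβ₂ : 0 ≤ β₂) (hx : 0 ≤ x) (hy : 0 ≤ y)
    (hW : W = (α₁ + β₂) * x + (α₂ + β₁) * y + l₁ + l₂) :
    (α₁ + β₂) * ((l₁ + α₁ * x) / W - β₁ * y / W) + (α₂ + β₁) * ((l₂ + α₂ * y) / W - β₂ * x / W)
      ≤ max α₁ α₂ + ((α₁ + β₂) * l₁ + (α₂ + β₁) * l₂) / W := by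
  have hW0 : 0 < W := by
    rw [hW]
    linarith [mul_nonneg (add_nonneg hα₁ hβ₂) hx, mul_nonneg (add_nonneg hα₂ hβ₁) hy]
  have hK₁ := le_max_left α₁ α₂
  have hK₂ := le_max_right α₁ α₂
  rw [← sub_nonneg]
  have key : max α₁ α₂ + ((α₁ + β₂) * l₁ + (α₂ + β₁) * l₂) / W -
      ((α₁ + β₂) * ((l₁ + α₁ * x) / W - β₁ * y / W) +
        (α₂ + β₁) * ((l₂ + α₂ * y) / W - β₂ * x / W)) =
      ((α₁ + β₂) * (max α₁ α₂ - α₁) * x + (α₂ + β₁) * (max α₁ α₂ - α₂) * y +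
        (α₁ + β₂) * β₁ * y + (α₂ + β₁) * β₂ * x + max α₁ α₂ * (l₁ + l₂)) / W := by
    field_simp
    rw [hW]
    ring
  rw [key]
  refine div_nonneg ?_ hW0.le
  have := mul_nonneg (mul_nonneg (add_nonneg hα₁ hβ₂) (sub_nonneg.mpr hK₁)) hx
  have := mul_nonneg (mul_nonneg (add_nonneg hα₂ hβ₁) (sub_nonneg.mpr hK₂)) hy
  have := mul_nonneg (le_max_of_le_left hα₁ : 0 ≤ max α₁ α₂) hl.le
  have : 0 ≤ (α₁ + β₂) * β₁ * y + (α₂ + β₁) * β₂ * x := by positivity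
  linarith

theorem max_lt_add_root_mul {α₁ α₂ β₁ β₂ : ℝ} (hβ₁ : 0 < β₁) (hβ₂ : 0 < β₂) :
    max α₁ α₂ < α₁ + (-(α₁ - α₂) + √((α₁ - α₂) ^ 2 + 4 * β₁ * β₂)) / (2 * β₂) * β₂ := by
  have hsqrt : |α₁ - α₂| < √((α₁ - α₂) ^ 2 + 4 * β₁ * β₂) :=
    Real.lt_sqrt (abs_nonneg _) |>.mpr (by rw [sq_abs]; nlinarith [mul_pos hβ₁ hβ₂])
  have hr : (-(α₁ - α₂) + √((α₁ - α₂) ^ 2 + 4 * β₁ * β₂)) / (2 * β₂) * β₂ =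
      (-(α₁ - α₂) + √((α₁ - α₂) ^ 2 + 4 * β₁ * β₂)) / 2 := by
    field_simp
  rw [hr]
  exact max_lt (by linarith [le_abs_self (α₁ - α₂)]) (by linarith [neg_abs_le (α₁ - α₂)])

theorem ae_condExp_linear_sub_le_of_transitions {Ω : Type*} {m m0 : MeasurableSpace Ω}
    {P : Measure Ω} [IsFiniteMeasure P] {l₁ l₂ α₁ α₂ β₁ β₂ : ℝ} (hl : 0 < l₁ + l₂)
    (hα₁ : 0 ≤ α₁) (hα₂ : 0 ≤ α₂) (hβ₁ : 0 ≤ β₁) (hβ₂ : 0 ≤ β₂) {x y x' y' : Ω → ℕ}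
    (hx : Measurable x) (hy : Measurable y) (hx' : Measurable x') (hy' : Measurable y')
    (hstep : ∀ᵐ ω ∂P, IsLatticeStep (x ω) (y ω) (x' ω) (y' ω)) {W : Ω → ℝ}
    (hW : ∀ ω, W ω = (l₁ + α₁ * (x ω : ℝ)) + (l₂ + α₂ * (y ω : ℝ)) +
      (if 1 ≤ x ω then β₁ * (y ω : ℝ) else 0) + (if 1 ≤ y ω then β₂ * (x ω : ℝ) else 0))
    (hright : P[{ω | x' ω = x ω + 1 ∧ y' ω = y ω}.indicator (fun _ => 1) | m]
      =ᵐ[P] fun ω => (l₁ + α₁ * (x ω : ℝ)) / W ω)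
    (hup : P[{ω | x' ω = x ω ∧ y' ω = y ω + 1}.indicator (fun _ => 1) | m]
      =ᵐ[P] fun ω => (l₂ + α₂ * (y ω : ℝ)) / W ω)
    (hleft : P[{ω | x' ω + 1 = x ω ∧ y' ω = y ω}.indicator (fun _ => 1) | m]
      =ᵐ[P] fun ω => (if 1 ≤ x ω then β₁ * (y ω : ℝ) else 0) / W ω)
    (hdown : P[{ω | x' ω = x ω ∧ y' ω + 1 = y ω}.indicator (fun _ => 1) | m]
      =ᵐ[P] fun ω => (if 1 ≤ y ω then β₂ * (x ω : ℝ) else 0) / W ω) :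
    ∀ᵐ ω ∂P, x ω ≠ 0 → y ω ≠ 0 →
      P[fun ω => (α₁ + β₂) * (x' ω : ℝ) + (α₂ + β₁) * (y' ω : ℝ) -
          ((α₁ + β₂) * (x ω : ℝ) + (α₂ + β₁) * (y ω : ℝ)) | m] ω ≤
        max α₁ α₂ + ((α₁ + β₂) * l₁ + (α₂ + β₁) * l₂) /
          ((α₁ + β₂) * (x ω : ℝ) + (α₂ + β₁) * (y ω : ℝ) + l₁ + l₂) := by
  filter_upwards [condExp_linear_sub_ae_eq_of_isLatticeStep hx hy hx' hy' hstep _ _,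
    hright, hup, hleft, hdown] with ω hlin h₁ h₂ h₃ h₄ hx0 hy0
  have hx1 : 1 ≤ x ω := Nat.one_le_iff_ne_zero.mpr hx0
  have hy1 : 1 ≤ y ω := Nat.one_le_iff_ne_zero.mpr hy0
  rw [hlin]
  simp only [Pi.add_apply, Pi.smul_apply, Pi.sub_apply, smul_eq_mul]
  have hWR : W ω = (α₁ + β₂) * (x ω : ℝ) + (α₂ + β₁) * (y ω : ℝ) + l₁ + l₂ := by
    rw [hW, if_pos hx1, if_pos hy1]; ring
  rw [h₁, h₂, h₃, h₄, if_pos hx1, if_pos hy1, hWR]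
  exact linear_drift_le_max_add_div hl hα₁ hα₂ hβ₁ hβ₂ (Nat.cast_nonneg _) (Nat.cast_nonneg _) rfl

theorem stmt_8_general
    {Ω : Type*} {m0 : MeasurableSpace Ω} (P : Measure Ω) [IsProbabilityMeasure P]
    (ℱ : Filtration ℕ m0)
    (l₁ l₂ β₁ β₂ α₁ α₂ : ℝ)
    (hl₁ : 0 < l₁) (hl₂ : 0 < l₂) (hβ₁ : 0 < β₁) (hβ₂ : 0 < β₂)
    (hα₁ : 0 ≤ α₁) (hα₂ : 0 ≤ α₂)
    (ζ₁ ζ₂ : ℕ → Ω → ℕ)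
    (hζ₁meas : ∀ n, Measurable[ℱ n] (ζ₁ n)) (hζ₂meas : ∀ n, Measurable[ℱ n] (ζ₂ n))
    (hstep : ∀ n, ∀ᵐ ω ∂P,
      (ζ₁ (n + 1) ω = ζ₁ n ω + 1 ∧ ζ₂ (n + 1) ω = ζ₂ n ω) ∨
      (ζ₁ (n + 1) ω = ζ₁ n ω ∧ ζ₂ (n + 1) ω = ζ₂ n ω + 1) ∨
      (ζ₁ (n + 1) ω + 1 = ζ₁ n ω ∧ ζ₂ (n + 1) ω = ζ₂ n ω) ∨
      (ζ₁ (n + 1) ω = ζ₁ n ω ∧ ζ₂ (n + 1) ω + 1 = ζ₂ n ω))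
    (W : ℕ → Ω → ℝ)
    (hW : ∀ n ω, W n ω =
      (l₁ + α₁ * (ζ₁ n ω : ℝ)) + (l₂ + α₂ * (ζ₂ n ω : ℝ)) +
      (if 1 ≤ ζ₁ n ω then β₁ * (ζ₂ n ω : ℝ) else 0) +
      (if 1 ≤ ζ₂ n ω then β₂ * (ζ₁ n ω : ℝ) else 0))
    (hright : ∀ n,
      P[({ω' | ζ₁ (n + 1) ω' = ζ₁ n ω' + 1 ∧ ζ₂ (n + 1) ω' = ζ₂ n ω'} : Set Ω).indicator
          (fun _ => (1 : ℝ)) | ℱ n]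
        =ᵐ[P] fun ω => (l₁ + α₁ * (ζ₁ n ω : ℝ)) / W n ω)
    (hupp : ∀ n,
      P[({ω' | ζ₁ (n + 1) ω' = ζ₁ n ω' ∧ ζ₂ (n + 1) ω' = ζ₂ n ω' + 1} : Set Ω).indicator
          (fun _ => (1 : ℝ)) | ℱ n]
        =ᵐ[P] fun ω => (l₂ + α₂ * (ζ₂ n ω : ℝ)) / W n ω)
    (hleft : ∀ n,
      P[({ω' | ζ₁ (n + 1) ω' + 1 = ζ₁ n ω' ∧ ζ₂ (n + 1) ω' = ζ₂ n ω'} : Set Ω).indicator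
          (fun _ => (1 : ℝ)) | ℱ n]
        =ᵐ[P] fun ω => (if 1 ≤ ζ₁ n ω then β₁ * (ζ₂ n ω : ℝ) else 0) / W n ω)
    (hdownp : ∀ n,
      P[({ω' | ζ₁ (n + 1) ω' = ζ₁ n ω' ∧ ζ₂ (n + 1) ω' + 1 = ζ₂ n ω'} : Set Ω).indicator
          (fun _ => (1 : ℝ)) | ℱ n]
        =ᵐ[P] fun ω => (if 1 ≤ ζ₂ n ω then β₂ * (ζ₁ n ω : ℝ) else 0) / W n ω)
    (r : ℝ) (hr : r = (-(α₁ - α₂) + Real.sqrt ((α₁ - α₂) ^ 2 + 4 * β₁ * β₂)) / (2 * β₂))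
    (R : ℕ → Ω → ℝ)
    (hR : ∀ n ω, R n ω = (α₁ + β₂) * (ζ₁ n ω : ℝ) + (α₂ + β₁) * (ζ₂ n ω : ℝ) + l₁ + l₂) :
    ∀ᵐ ω ∂P, (∀ n, ζ₁ n ω ≠ 0 ∧ ζ₂ n ω ≠ 0) →
      Filter.limsup (fun n : ℕ => R n ω / (n : ℝ)) atTop < α₁ + r * β₂ := by
  have hRpos : ∀ n ω, 0 < R n ω := fun n ω => by rw [hR]; positivity
  have hRmeas : ∀ n, StronglyMeasurable[ℱ n] (R n) := fun n => by
    have := hζ₁meas n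
    have := hζ₂meas n
    rw [show R n = _ from funext (hR n)]
    exact Measurable.stronglyMeasurable (by fun_prop)
  have hinc : ∀ n, (fun ω => R (n + 1) ω - R n ω) = fun ω =>
      (α₁ + β₂) * (ζ₁ (n + 1) ω : ℝ) + (α₂ + β₁) * (ζ₂ (n + 1) ω : ℝ) -
        ((α₁ + β₂) * (ζ₁ n ω : ℝ) + (α₂ + β₁) * (ζ₂ n ω : ℝ)) :=
    fun n => funext fun ω => by rw [hR, hR]; ring
  have hjump : ∀ n, ∀ᵐ ω ∂P, |R (n + 1) ω - R n ω| ≤ (α₁ + β₂) + (α₂ + β₁) := fun n => by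
    filter_upwards [hstep n] with ω h
    exact congrFun (hinc n) ω ▸ IsLatticeStep.abs_linear_sub_le h (by positivity) (by positivity)
  have hdrift : ∀ n, ∀ᵐ ω ∂P, (∀ n, ζ₁ n ω ≠ 0 ∧ ζ₂ n ω ≠ 0) →
      P[fun ω => R (n + 1) ω - R n ω | ℱ n] ω ≤
        max α₁ α₂ + ((α₁ + β₂) * l₁ + (α₂ + β₁) * l₂) / R n ω := fun n => by
    have hmeas : ∀ k, Measurable (ζ₁ k) ∧ Measurable (ζ₂ k) := fun k =>
      ⟨(hζ₁meas k).mono (ℱ.le k) le_rfl, (hζ₂meas k).mono (ℱ.le k) le_rfl⟩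
    filter_upwards [hinc n ▸ ae_condExp_linear_sub_le_of_transitions (m := ℱ n) (by linarith)
      hα₁ hα₂ hβ₁.le hβ₂.le (hmeas n).1 (hmeas n).2 (hmeas (n + 1)).1 (hmeas (n + 1)).2
      (hstep n) (hW n) (hright n) (hupp n) (hleft n) (hdownp n)] with ω h hsurv
    rw [hR]
    exact h (hsurv n).1 (hsurv n).2
  filter_upwards [ae_limsup_div_le_of_condExp_le (le_max_of_le_left hα₁) hRmeas hRpos hjump
    hdrift] with ω hlimsup hsurv
  exact (hlimsup hsurv).trans_lt (hr ▸ max_lt_add_root_mul hβ₁ hβ₂)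

/-- Proposition on the upper bound for `Rₙ`. For the discrete-time
competition process with linear interaction, if `α₁ ≥ α₂` and `α₁α₂ > β₁β₂`, then almost
surely on the event `{τ = ∞}`, `limsup_{n→∞} Rₙ/n < α₁ + rβ₂`, where
`Rₙ = (α₁+β₂)ζ₁(n) + (α₂+β₁)ζ₂(n) + λ₁ + λ₂` and `r` is the positive root of
`β₂r² + (α₁ − α₂)r − β₁ = 0`. -/
theorem stmt_8
    {Ω : Type*} {m0 : MeasurableSpace Ω} (P : Measure Ω) [IsProbabilityMeasure P]
    (ℱ : Filtration ℕ m0)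
    (l₁ l₂ β₁ β₂ α₁ α₂ : ℝ)
    (hl₁ : 0 < l₁) (hl₂ : 0 < l₂) (hβ₁ : 0 < β₁) (hβ₂ : 0 < β₂)
    (hα₁ : 0 ≤ α₁) (hα₂ : 0 ≤ α₂)
    (ζ₁ ζ₂ : ℕ → Ω → ℕ)
    (hζ₁meas : ∀ n, Measurable[ℱ n] (ζ₁ n)) (hζ₂meas : ∀ n, Measurable[ℱ n] (ζ₂ n))
    (x₀ y₀ : ℕ) (hinit : ∀ ω, ζ₁ 0 ω = x₀ ∧ ζ₂ 0 ω = y₀)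
    (hstep : ∀ n, ∀ᵐ ω ∂P,
      (ζ₁ (n + 1) ω = ζ₁ n ω + 1 ∧ ζ₂ (n + 1) ω = ζ₂ n ω) ∨
      (ζ₁ (n + 1) ω = ζ₁ n ω ∧ ζ₂ (n + 1) ω = ζ₂ n ω + 1) ∨
      (ζ₁ (n + 1) ω + 1 = ζ₁ n ω ∧ ζ₂ (n + 1) ω = ζ₂ n ω) ∨
      (ζ₁ (n + 1) ω = ζ₁ n ω ∧ ζ₂ (n + 1) ω + 1 = ζ₂ n ω))
    (W : ℕ → Ω → ℝ)
    (hW : ∀ n ω, W n ω =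
      (l₁ + α₁ * (ζ₁ n ω : ℝ)) + (l₂ + α₂ * (ζ₂ n ω : ℝ)) +
      (if 1 ≤ ζ₁ n ω then β₁ * (ζ₂ n ω : ℝ) else 0) +
      (if 1 ≤ ζ₂ n ω then β₂ * (ζ₁ n ω : ℝ) else 0))
    (hright : ∀ n,
      P[({ω' | ζ₁ (n + 1) ω' = ζ₁ n ω' + 1 ∧ ζ₂ (n + 1) ω' = ζ₂ n ω'} : Set Ω).indicator
          (fun _ => (1 : ℝ)) | ℱ n]
        =ᵐ[P] fun ω => (l₁ + α₁ * (ζ₁ n ω : ℝ)) / W n ω)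
    (hupp : ∀ n,
      P[({ω' | ζ₁ (n + 1) ω' = ζ₁ n ω' ∧ ζ₂ (n + 1) ω' = ζ₂ n ω' + 1} : Set Ω).indicator
          (fun _ => (1 : ℝ)) | ℱ n]
        =ᵐ[P] fun ω => (l₂ + α₂ * (ζ₂ n ω : ℝ)) / W n ω)
    (hleft : ∀ n,
      P[({ω' | ζ₁ (n + 1) ω' + 1 = ζ₁ n ω' ∧ ζ₂ (n + 1) ω' = ζ₂ n ω'} : Set Ω).indicator
          (fun _ => (1 : ℝ)) | ℱ n]
        =ᵐ[P] fun ω => (if 1 ≤ ζ₁ n ω then β₁ * (ζ₂ n ω : ℝ) else 0) / W n ω)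
    (hdownp : ∀ n,
      P[({ω' | ζ₁ (n + 1) ω' = ζ₁ n ω' ∧ ζ₂ (n + 1) ω' + 1 = ζ₂ n ω'} : Set Ω).indicator
          (fun _ => (1 : ℝ)) | ℱ n]
        =ᵐ[P] fun ω => (if 1 ≤ ζ₂ n ω then β₂ * (ζ₁ n ω : ℝ) else 0) / W n ω)
    (ha12 : α₂ ≤ α₁) (hab : β₁ * β₂ < α₁ * α₂)
    (r : ℝ) (hr : r = (-(α₁ - α₂) + Real.sqrt ((α₁ - α₂) ^ 2 + 4 * β₁ * β₂)) / (2 * β₂))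
    (R : ℕ → Ω → ℝ)
    (hR : ∀ n ω, R n ω = (α₁ + β₂) * (ζ₁ n ω : ℝ) + (α₂ + β₁) * (ζ₂ n ω : ℝ) + l₁ + l₂) :
    ∀ᵐ ω ∂P, (∀ n, ζ₁ n ω ≠ 0 ∧ ζ₂ n ω ≠ 0) →
      Filter.limsup (fun n : ℕ => R n ω / (n : ℝ)) atTop < α₁ + r * β₂ :=
  stmt_8_general P ℱ l₁ l₂ β₁ β₂ α₁ α₂ hl₁ hl₂ hβ₁ hβ₂ hα₁ hα₂ ζ₁ ζ₂ hζ₁meas hζ₂meas hstep W hW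
    hright hupp hleft hdownp r hr R hR
end
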